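/- arXiv:1711.00621 — 10 statements merged into one kernel-verified Lean document; each statement's English description precedes it below -/
import Mathlib

section
/- Let a ∈ ℝ, b > 0, and λ ∈ ℂ with Im λ > 0. Then there exists exactly one complex number K with Im K > 0 satisfying K · (a − λ − b² K) = 1. -/
/-!
The equation `K (c - β K) = 1` is the quadratic `β K² - c K + 1 = 0`. Its two roots have sum
`c / β` and product `1 / β`, so they are exchanged by `K ↦ (β K)⁻¹`, which reverses the sign of
the imaginary part; no root is real because `Im c ≠ 0`. Hence exactly one root lies in the upper
half-plane as soon as a root exists: two such roots would have `Im (K + K') = Im c / β < 0`.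
-/

namespace Complex

variable {c K K' : ℂ} {β : ℝ}

theorem eq_of_mul_sub_mul_eq_one (hβ : 0 ≤ β) (hc : c.im < 0) (hK : 0 < K.im) (hK' : 0 < K'.im)
    (h : K * (c - β * K) = 1) (h' : K' * (c - β * K') = 1) : K = K' := by
  by_contra hne
  have hfac : (K' - K) * (c - β * (K + K')) = 0 := by linear_combination h' - h
  have hsum : c = β * (K + K') :=
    sub_eq_zero.1 ((mul_eq_zero.1 hfac).resolve_left (sub_ne_zero.2 (Ne.symm hne)))
  have him : c.im = β * (K.im + K'.im) := by simpa using congrArg im hsum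
  nlinarith

theorem exists_mul_sub_mul_eq_one (c β : ℂ) (hβ : β ≠ 0) : ∃ K : ℂ, K * (c - β * K) = 1 := by
  obtain ⟨K, hK⟩ := exists_quadratic_eq_zero hβ (IsAlgClosed.exists_eq_mul_self (discrim β (-c) 1))
  exact ⟨K, by linear_combination -hK⟩

theorem inv_mul_sub_mul_eq_one {c β K : ℂ} (hβ : β ≠ 0) (h : K * (c - β * K) = 1) :
    (β * K)⁻¹ * (c - β * (β * K)⁻¹) = 1 := by
  have hK : K ≠ 0 := left_ne_zero_of_mul_eq_one h
  field_simp
  linear_combination h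

theorem im_ne_zero_of_mul_sub_mul_eq_one (hc : c.im ≠ 0) (h : K * (c - β * K) = 1) :
    K.im ≠ 0 := by
  intro hK
  have hre : K.re * c.im = 0 := by simpa [hK] using congrArg im h
  have hre0 : K.re = 0 := (mul_eq_zero.1 hre).resolve_right hc
  simp [Complex.ext_iff, hK, hre0] at h

theorem existsUnique_im_pos_mul_sub_mul_eq_one (hβ : 0 < β) (hc : c.im < 0) :
    ∃! K : ℂ, 0 < K.im ∧ K * (c - β * K) = 1 := by
  have hβ' : (β : ℂ) ≠ 0 := ofReal_ne_zero.2 hβ.ne'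
  refine existsUnique_of_exists_of_unique ?_
    fun K K' ⟨hK, h⟩ ⟨hK', h'⟩ ↦ eq_of_mul_sub_mul_eq_one hβ.le hc hK hK' h h'
  obtain ⟨K, h⟩ := exists_mul_sub_mul_eq_one c β hβ'
  rcases (im_ne_zero_of_mul_sub_mul_eq_one hc.ne h).lt_or_gt with hK | hK
  · refine ⟨(β * K)⁻¹, ?_, inv_mul_sub_mul_eq_one hβ' h⟩
    have hnorm : 0 < normSq (β * K) := normSq_pos.2 (mul_ne_zero hβ' (left_ne_zero_of_mul_eq_one h))
    rw [inv_im, im_ofReal_mul]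
    exact div_pos (by nlinarith) hnorm
  · exact ⟨K, hK, h⟩

end Complex

/-- For `a ∈ ℝ`, `b > 0`, and `λ ∈ ℂ` with `Im λ > 0`, there is exactly one
complex `K` with `Im K > 0` satisfying `K (a − λ − b² K) = 1`. -/
theorem stmt6 (a : ℝ) (b : ℝ) (hb : 0 < b) (lam : ℂ) (hlam : 0 < lam.im) :
    ∃! K : ℂ, 0 < K.im ∧ K * ((a : ℂ) - lam - (b : ℂ) ^ 2 * K) = 1 := by
  have hc : ((a : ℂ) - lam).im < 0 := by simpa using hlam
  simpa using Complex.existsUnique_im_pos_mul_sub_mul_eq_one (pow_pos hb 2) hc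
end

section
/- Let a ∈ ℝ, b > 0, and λ ∈ ℂ with Im λ > 0. Define the sequence of continued-fraction approximants z_0 = 1/(a − λ) and z_{k+1} = 1/(a − λ − b² z_k). Then every z_k is well defined (all denominators are nonzero), Im z_k > 0 for all k, and z_k converges as k → ∞ to the unique complex number K with Im K > 0 satisfying K · (a − λ − b² K) = 1. -/
/-!
With `w = a - λ`, so that `Im w < 0`, the map `u ↦ 1 / (w - b² u)` sends the closed upper
half-plane into the open one. It is a Möbius map whose fixed points are the roots `K` and
`K' = (b² K)⁻¹` of `b² X² - w X + 1`; exactly one of them, `K`, lies in the upper half-plane.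
In the coordinate `(u - K) / (u - K')` the map is multiplication by `b² K²`, and taking imaginary
parts in `w - b² K = K⁻¹` gives `b² |K|² < 1`, so the iterates converge to `K` geometrically.
-/

open Filter Topology

section Field

variable {F : Type*} [Field F] {w β K u v : F}

theorem sub_eq_of_mul_sub_mul_eq_one (hK : K * (w - β * K) = 1) (hv : v * (w - β * u) = 1) :
    v - K = β * K * v * (u - K) := by
  linear_combination K * hv - v * hK

theorem inv_mul_sub_mul_inv_eq_one (hβ : β ≠ 0) (hK : K * (w - β * K) = 1) :
    (β * K)⁻¹ * (w - β * (β * K)⁻¹) = 1 := by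
  have hK0 : K ≠ 0 := left_ne_zero_of_mul_eq_one hK
  have hw : w - β * (β * K)⁻¹ = β * K := by
    rw [mul_inv, ← mul_assoc, mul_inv_cancel₀ hβ, one_mul, ← eq_inv_of_mul_eq_one_right hK]
    ring
  rw [hw, inv_mul_cancel₀ (mul_ne_zero hβ hK0)]

theorem div_sub_inv_eq_mul (hβ : β ≠ 0) (hK : K * (w - β * K) = 1) (hv : v * (w - β * u) = 1) :
    (v - K) / (v - (β * K)⁻¹) = β * K ^ 2 * ((u - K) / (u - (β * K)⁻¹)) := by
  have hβv : β * v ≠ 0 := mul_ne_zero hβ (left_ne_zero_of_mul_eq_one hv)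
  rw [sub_eq_of_mul_sub_mul_eq_one hK hv,
    sub_eq_of_mul_sub_mul_eq_one (inv_mul_sub_mul_inv_eq_one hβ hK) hv]
  calc β * K * v * (u - K) / (β * (β * K)⁻¹ * v * (u - (β * K)⁻¹))
      = (β * v) * (K * (u - K)) / ((β * v) * ((β * K)⁻¹ * (u - (β * K)⁻¹))) := by ring
    _ = K / (β * K)⁻¹ * ((u - K) / (u - (β * K)⁻¹)) := by
      rw [mul_div_mul_left _ _ hβv, mul_div_mul_comm]
    _ = β * K ^ 2 * ((u - K) / (u - (β * K)⁻¹)) := by rw [div_inv_eq_mul]; ring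

end Field

theorem tendsto_of_div_sub_eq_mul {𝕜 : Type*} [NormedField 𝕜] {z : ℕ → 𝕜} {K K' m : 𝕜}
    (hKK' : K ≠ K') (hm : ‖m‖ < 1) (hz : ∀ k, z k ≠ K')
    (hstep : ∀ k, (z (k + 1) - K) / (z (k + 1) - K') = m * ((z k - K) / (z k - K'))) :
    Tendsto z atTop (𝓝 K) := by
  set r : ℕ → 𝕜 := fun k => (z k - K) / (z k - K')
  have hr : ∀ k, r k = m ^ k * r 0 := by
    intro k
    induction k with
    | zero => simp
    | succ k ih => rw [pow_succ, mul_comm (m ^ k) m, mul_assoc, ← ih]; exact hstep k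
  have hr_lim : Tendsto r atTop (𝓝 0) := by
    simpa [← hr] using (tendsto_pow_atTop_nhds_zero_of_norm_lt_one hm).mul_const (r 0)
  have hr_ne : ∀ k, 1 - r k ≠ 0 := by
    intro k h
    rw [sub_eq_zero, eq_comm, div_eq_one_iff_eq (sub_ne_zero.2 (hz k))] at h
    exact hKK' (sub_right_injective h)
  have hz_eq : ∀ k, z k = (K - K' * r k) / (1 - r k) := by
    intro k
    have hrz : r k * (z k - K') = z k - K := div_mul_cancel₀ _ (sub_ne_zero.2 (hz k))
    rw [eq_div_iff (hr_ne k)]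
    linear_combination -hrz
  have hlim : Tendsto (fun k => (K - K' * r k) / (1 - r k)) atTop (𝓝 ((K - K' * 0) / (1 - 0))) :=
    (tendsto_const_nhds.sub (tendsto_const_nhds.mul hr_lim)).div
      (tendsto_const_nhds.sub hr_lim) (by simp)
  simpa [← hz_eq] using hlim

namespace Complex

variable {w u K K' : ℂ} {β : ℝ}

theorem im_inv_pos_of_im_neg (hu : u.im < 0) : 0 < u⁻¹.im := by
  rw [inv_im]
  exact div_pos (neg_pos.2 hu) (normSq_pos.2 (ne_of_apply_ne im (by simpa using hu.ne)))

theorem im_inv_neg_of_im_pos (hu : 0 < u.im) : u⁻¹.im < 0 := by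
  simpa using im_inv_pos_of_im_neg (u := -u) (by simpa using hu)

theorem im_sub_ofReal_mul_neg (hw : w.im < 0) (hβ : 0 ≤ β) (hu : 0 ≤ u.im) :
    (w - β * u).im < 0 := by
  rw [sub_im, im_ofReal_mul]
  nlinarith

theorem im_ne_zero_of_mul_sub_mul_eq_one_s7 (hw : w.im ≠ 0) (hK : K * (w - β * K) = 1) :
    K.im ≠ 0 := by
  intro h
  have hK_real : K = (K.re : ℂ) := ext rfl (by simpa using h)
  have him := congrArg im hK
  rw [hK_real] at him hK
  simp only [mul_im, ofReal_re, sub_im, ofReal_im, mul_zero, zero_mul, add_zero, sub_zero, sub_re,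
    mul_re, one_im, mul_eq_zero] at him
  rcases him with hre | hw0
  · simp [hre] at hK
  · exact hw hw0

theorem exists_im_pos_mul_sub_mul_eq_one (hβ : 0 < β) (hw : w.im < 0) :
    ∃ K : ℂ, 0 < K.im ∧ K * (w - β * K) = 1 := by
  have hβ' : (β : ℂ) ≠ 0 := ofReal_ne_zero.2 hβ.ne'
  obtain ⟨K₁, hK₁⟩ := exists_quadratic_eq_zero (b := -w) (c := 1) hβ'
    (IsAlgClosed.exists_eq_mul_self _)
  replace hK₁ : K₁ * (w - β * K₁) = 1 := by linear_combination -hK₁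
  rcases (im_ne_zero_of_mul_sub_mul_eq_one_s7 hw.ne hK₁).lt_or_gt with hneg | hpos
  · -- the other root `(β K₁)⁻¹` lies in the opposite half-plane
    refine ⟨(β * K₁)⁻¹, ?_, inv_mul_sub_mul_inv_eq_one hβ' hK₁⟩
    exact im_inv_pos_of_im_neg (by rw [im_ofReal_mul]; exact mul_neg_of_pos_of_neg hβ hneg)
  · exact ⟨K₁, hpos, hK₁⟩

theorem eq_of_mul_sub_mul_eq_one_s7 (hβ : 0 ≤ β) (hw : w.im < 0) (hK : 0 < K.im) (hK' : 0 < K'.im)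
    (hKw : K * (w - β * K) = 1) (hK'w : K' * (w - β * K') = 1) : K' = K := by
  have hfactor : (K' - K) * (w - β * (K' + K)) = 0 := by linear_combination hK'w - hKw
  have hne : w - β * (K' + K) ≠ 0 :=
    ne_of_apply_ne im (im_sub_ofReal_mul_neg hw hβ (by rw [add_im]; positivity)).ne
  exact sub_eq_zero.1 ((mul_eq_zero.1 hfactor).resolve_right hne)

theorem norm_ofReal_mul_sq_lt_one (hβ : 0 ≤ β) (hw : w.im < 0) (hK : 0 < K.im)
    (hKw : K * (w - β * K) = 1) : ‖(β : ℂ) * K ^ 2‖ < 1 := by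
  have hK0 : 0 < normSq K := normSq_pos.2 (left_ne_zero_of_mul_eq_one hKw)
  have him := congrArg im (eq_inv_of_mul_eq_one_right hKw)
  rw [sub_im, im_ofReal_mul, inv_im] at him
  rw [norm_mul, norm_pow, norm_real, Real.norm_of_nonneg hβ, Complex.sq_norm]
  have hrel : K.im * (β * normSq K - 1) = w.im * normSq K := by
    field_simp at him
    linear_combination -him
  nlinarith [mul_neg_of_neg_of_pos hw hK0]

end Complex

/-- For `Im λ > 0` the continued-fraction approximants
`z_0 = 1/(a−λ)`, `z_{k+1} = 1/(a − λ − b² z_k)` are well defined (all denominators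
are nonzero), have positive imaginary part, and converge to the unique `K` with
`Im K > 0` and `K (a − λ − b² K) = 1`. -/
theorem stmt7 (a : ℝ) (b : ℝ) (hb : 0 < b) (lam : ℂ) (hlam : 0 < lam.im)
    (z : ℕ → ℂ)
    (hz0 : z 0 = 1 / ((a : ℂ) - lam))
    (hzrec : ∀ k : ℕ, z (k + 1) = 1 / ((a : ℂ) - lam - (b : ℂ) ^ 2 * z k)) :
    ((a : ℂ) - lam ≠ 0) ∧
    (∀ k : ℕ, (a : ℂ) - lam - (b : ℂ) ^ 2 * z k ≠ 0) ∧
    (∀ k : ℕ, 0 < (z k).im) ∧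
    ∃ K : ℂ, (0 < K.im ∧ K * ((a : ℂ) - lam - (b : ℂ) ^ 2 * K) = 1) ∧
      (∀ K' : ℂ, 0 < K'.im ∧ K' * ((a : ℂ) - lam - (b : ℂ) ^ 2 * K') = 1 → K' = K) ∧
      Tendsto z atTop (nhds K) := by
  have hw : ((a : ℂ) - lam).im < 0 := by simpa using hlam
  have hβ : 0 < b ^ 2 := by positivity
  rw [show (b : ℂ) ^ 2 = ((b ^ 2 : ℝ) : ℂ) by push_cast; rfl] at hzrec ⊢
  have hden_im : ∀ u : ℂ, 0 ≤ u.im → ((a : ℂ) - lam - (b ^ 2 : ℝ) * u).im < 0 :=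
    fun u hu => Complex.im_sub_ofReal_mul_neg hw hβ.le hu
  have hz_im : ∀ k, 0 < (z k).im := by
    intro k
    induction k with
    | zero => rw [hz0, one_div]; exact Complex.im_inv_pos_of_im_neg hw
    | succ k ih => rw [hzrec, one_div]; exact Complex.im_inv_pos_of_im_neg (hden_im _ ih.le)
  obtain ⟨K, hK_im, hK⟩ := Complex.exists_im_pos_mul_sub_mul_eq_one hβ hw
  have hden_ne : ∀ k, (a : ℂ) - lam - (b ^ 2 : ℝ) * z k ≠ 0 := fun k =>
    ne_of_apply_ne Complex.im (by simpa using (hden_im _ (hz_im k).le).ne)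
  have hK'_im : (((b ^ 2 : ℝ) : ℂ) * K)⁻¹.im < 0 :=
    Complex.im_inv_neg_of_im_pos (by rw [Complex.im_ofReal_mul]; positivity)
  refine ⟨ne_of_apply_ne Complex.im (by simpa using hw.ne), hden_ne, hz_im, K, ⟨hK_im, hK⟩,
    fun K' ⟨hK'_pos, hK'⟩ => Complex.eq_of_mul_sub_mul_eq_one_s7 hβ.le hw hK_im hK'_pos hK hK', ?_⟩
  refine tendsto_of_div_sub_eq_mul (ne_of_apply_ne Complex.im (by linarith))
    (Complex.norm_ofReal_mul_sq_lt_one hβ.le hw hK_im hK)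
    (fun k => ne_of_apply_ne Complex.im (by linarith [hz_im k])) fun k => ?_
  exact div_sub_inv_eq_mul (by exact_mod_cast hβ.ne') hK
    (by rw [hzrec, one_div_mul_cancel (hden_ne k)])
end

section
/- Let a ∈ ℝ, b > 0, and λ ∈ ℂ with Im λ > 0. Define K = (1/(2π b²)) ∫_{a−2b}^{a+2b} √(4b² − (a−x)²)/(x − λ) dx. Then Im K > 0 and K · (a − λ − b² K) = 1; that is, the Stieltjes transform of the density f(x) = √(4b² − (a−x)²)/(2π b²) on [a−2b, a+2b] is the unique root with positive imaginary part of the quadratic equation b² K² − (a − λ) K + 1 = 0. -/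
/-!
The substitution `x = a + 2 b s` turns `K` into `(π b)⁻¹ ∫_{-1}^{1} √(1 - s²) / (s - w) ds` with
`w = (λ - a) / (2 b)` in the upper half-plane. With `s = sin θ` the integrand becomes
`cos² θ / (sin θ - w) = (1 - w²) / (sin θ - w) - (sin θ + w)`, and the Weierstrass substitution
`T = tan (θ / 2)` turns `dθ / (sin θ - w)` into a rational function of `T` with simple poles at the
roots `t₁, t₂ = t₁⁻¹` of `w T² - 2 T + w`, one in each half-plane; integrating by complex logarithms
gives `π (i r - w)` with `r² = 1 - w²`, so `b K = i r - w` solves the quadratic.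
`Im K > 0` because the integrand has positive imaginary part, and the other root of the quadratic is
`(b² K)⁻¹`, which lies in the lower half-plane.
-/

open Set Real intervalIntegral
open Complex (I)

lemma Complex.log_mul_of_im_pos_of_im_neg {x y : ℂ} (hx : 0 < x.im) (hy : y.im < 0) :
    Complex.log (x * y) = Complex.log x + Complex.log y := by
  have hx0 : x ≠ 0 := fun h => by simp [h] at hx
  have hy0 : y ≠ 0 := fun h => by simp [h] at hy
  refine Complex.log_mul hx0 hy0 ⟨?_, ?_⟩
  · linarith [Complex.arg_nonneg_iff.2 hx.le, Complex.neg_pi_lt_arg y]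
  · linarith [Complex.arg_le_pi x, Complex.arg_neg_iff.2 hy]

lemma Complex.log_neg_of_im_pos {z : ℂ} (hz : 0 < z.im) :
    Complex.log (-z) = Complex.log z - π * I := by
  apply Complex.ext
  · simp [Complex.log_re]
  · simp [Complex.log_im, Complex.arg_neg_eq_arg_sub_pi_of_im_pos hz]

lemma ofReal_sub_ne_zero {t : ℂ} (ht : t.im ≠ 0) (u : ℝ) : (u : ℂ) - t ≠ 0 :=
  sub_ne_zero.2 (ne_of_apply_ne Complex.im (by simpa using ht.symm))

lemma hasDerivAt_log_ofReal_sub {t : ℂ} (ht : t.im ≠ 0) (u : ℝ) :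
    HasDerivAt (fun u : ℝ => Complex.log (u - t)) ((u - t)⁻¹) u := by
  have hslit : (u : ℂ) - t ∈ Complex.slitPlane :=
    Complex.mem_slitPlane_iff.2 (Or.inr (by simpa using ht))
  simpa using ((Complex.hasDerivAt_log hslit).comp (u : ℂ)
    ((hasDerivAt_id (u : ℂ)).sub_const t)).comp_ofReal

noncomputable def logRatio (t₁ t₂ : ℂ) (u : ℝ) : ℂ :=
  Complex.log (u - t₁) - Complex.log (u - t₂)

lemma hasDerivAt_logRatio {t₁ t₂ : ℂ} (h₁ : t₁.im ≠ 0) (h₂ : t₂.im ≠ 0) (u : ℝ) :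
    HasDerivAt (logRatio t₁ t₂) ((u - t₁)⁻¹ - (u - t₂)⁻¹) u :=
  (hasDerivAt_log_ofReal_sub h₁ u).sub (hasDerivAt_log_ofReal_sub h₂ u)

lemma logRatio_one_sub_logRatio_neg_one {t₁ t₂ : ℂ} (hprod : t₁ * t₂ = 1)
    (h₁ : t₁.im < 0) (h₂ : 0 < t₂.im) :
    logRatio t₁ t₂ 1 - logRatio t₁ t₂ (-1) = -(π * I) := by
  have e₁ : Complex.log (t₁ - t₂) = Complex.log (1 - t₁) + Complex.log (-1 - t₂) := by
    rw [← Complex.log_mul_of_im_pos_of_im_neg (by simpa using h₁) (by simpa using h₂)]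
    congr 1
    linear_combination -hprod
  have e₂ : Complex.log (t₂ - t₁) = Complex.log (-1 - t₁) + Complex.log (1 - t₂) := by
    rw [← Complex.log_mul_of_im_pos_of_im_neg (by simpa using h₁) (by simpa using h₂)]
    congr 1
    linear_combination -hprod
  have e₃ : Complex.log (t₁ - t₂) = Complex.log (t₂ - t₁) - π * I := by
    rw [← Complex.log_neg_of_im_pos (by rw [Complex.sub_im]; linarith), neg_sub]
  simp only [logRatio]
  push_cast
  linear_combination e₃ - e₁ + e₂

lemma Real.hasDerivAt_tan_half {θ : ℝ} (h : cos (θ / 2) ≠ 0) :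
    HasDerivAt (fun θ => tan (θ / 2)) ((1 + tan (θ / 2) ^ 2) / 2) θ := by
  refine ((Real.hasDerivAt_tan h).comp θ ((hasDerivAt_id θ).div_const 2)).congr_deriv ?_
  rw [← Real.inv_one_add_tan_sq h]
  field_simp

section Weierstrass

variable {w t₁ t₂ : ℂ}

lemma sin_sub_eq_mul_tan_half (hsum : w * (t₁ + t₂) = 2) (hprod : t₁ * t₂ = 1) (θ : ℝ) :
    (sin θ : ℂ) - w = -w * (tan (θ / 2) - t₁) * (tan (θ / 2) - t₂) / (1 + tan (θ / 2) ^ 2) := by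
  rw [Real.sin_eq_two_mul_tan_half_div_one_add_tan_half_sq θ]
  generalize tan (θ / 2) = T
  have hT : (1 : ℂ) + T ^ 2 ≠ 0 := by norm_cast; positivity
  push_cast
  field_simp
  linear_combination (-T : ℂ) * hsum + w * hprod

lemma sin_sub_ne_zero (hsum : w * (t₁ + t₂) = 2) (hprod : t₁ * t₂ = 1)
    (h₁ : t₁.im ≠ 0) (h₂ : t₂.im ≠ 0) (θ : ℝ) : (sin θ : ℂ) - w ≠ 0 := by
  have hw : w ≠ 0 := by rintro rfl; simp at hsum
  rw [sin_sub_eq_mul_tan_half hsum hprod]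
  exact div_ne_zero (mul_ne_zero (mul_ne_zero (neg_ne_zero.2 hw) (ofReal_sub_ne_zero h₁ _))
    (ofReal_sub_ne_zero h₂ _)) (by norm_cast; positivity)

lemma continuous_inv_sin_sub (hsum : w * (t₁ + t₂) = 2) (hprod : t₁ * t₂ = 1)
    (h₁ : t₁.im ≠ 0) (h₂ : t₂.im ≠ 0) : Continuous fun θ : ℝ => ((sin θ : ℂ) - w)⁻¹ :=
  (by fun_prop : Continuous fun θ : ℝ => (sin θ : ℂ) - w).inv₀ (sin_sub_ne_zero hsum hprod h₁ h₂)

lemma hasDerivAt_logRatio_tan_half (hsum : w * (t₁ + t₂) = 2) (hprod : t₁ * t₂ = 1)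
    (h₁ : t₁.im < 0) (h₂ : 0 < t₂.im) {θ : ℝ} (hθ : cos (θ / 2) ≠ 0) :
    HasDerivAt (fun θ => 2 / (w * (t₂ - t₁)) * logRatio t₁ t₂ (tan (θ / 2)))
      (((sin θ : ℂ) - w)⁻¹) θ := by
  have h₁₂ : t₂ - t₁ ≠ 0 := sub_ne_zero.2 (ne_of_apply_ne Complex.im (by linarith))
  refine (((hasDerivAt_logRatio h₁.ne h₂.ne' _).scomp θ (Real.hasDerivAt_tan_half hθ)).const_mul
    _).congr_deriv ?_
  rw [sin_sub_eq_mul_tan_half hsum hprod, Complex.real_smul]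
  generalize tan (θ / 2) = T
  have hT₁ := ofReal_sub_ne_zero h₁.ne T
  have hT₂ := ofReal_sub_ne_zero h₂.ne' T
  push_cast
  field_simp
  ring

theorem integral_inv_sin_sub (hsum : w * (t₁ + t₂) = 2) (hprod : t₁ * t₂ = 1)
    (h₁ : t₁.im < 0) (h₂ : 0 < t₂.im) :
    ∫ θ in (-(π / 2))..(π / 2), ((sin θ : ℂ) - w)⁻¹ = 2 * π * I / (w * (t₁ - t₂)) := by
  have hcos : ∀ θ ∈ uIcc (-(π / 2)) (π / 2), cos (θ / 2) ≠ 0 := by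
    intro θ hθ
    rw [uIcc_of_le (by linarith [pi_pos])] at hθ
    exact (cos_pos_of_mem_Ioo ⟨by linarith [hθ.1, pi_pos], by linarith [hθ.2, pi_pos]⟩).ne'
  rw [integral_eq_sub_of_hasDerivAt
    (fun θ hθ => hasDerivAt_logRatio_tan_half hsum hprod h₁ h₂ (hcos θ hθ))
    ((continuous_inv_sin_sub hsum hprod h₁.ne h₂.ne').intervalIntegrable _ _),
    neg_div, div_div, show π / (2 * 2) = π / 4 by ring, tan_neg, tan_pi_div_four, ← mul_sub,
    logRatio_one_sub_logRatio_neg_one hprod h₁ h₂, ← neg_sub t₁ t₂]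
  field_simp

end Weierstrass

lemma exists_im_neg_mul_add_inv_eq_two {w : ℂ} (hw : 0 < w.im) :
    ∃ t : ℂ, t.im < 0 ∧ w * (t + t⁻¹) = 2 := by
  have hw0 : w ≠ 0 := fun h => by simp [h] at hw
  obtain ⟨t, ht⟩ :=
    exists_quadratic_eq_zero hw0 (IsAlgClosed.exists_eq_mul_self (discrim w (-2) w))
  have ht0 : t ≠ 0 := by rintro rfl; simp [hw0] at ht
  have hsum : w * (t + t⁻¹) = 2 := by field_simp; linear_combination ht
  rcases lt_trichotomy t.im 0 with hneg | hzero | hpos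
  · exact ⟨t, hneg, hsum⟩
  · -- for real `t`, the imaginary part of `w t² - 2 t + w` is `(t² + 1) Im w > 0`
    have him : w.im * (t.re ^ 2 + 1) = 0 := by
      simpa [Complex.mul_im, hzero, sq, mul_comm, mul_add] using congrArg Complex.im ht
    exact absurd him (by positivity)
  · refine ⟨t⁻¹, ?_, by rwa [inv_inv, add_comm]⟩
    rw [Complex.inv_im]
    exact div_neg_of_neg_of_pos (neg_neg_of_pos hpos) (Complex.normSq_pos.2 ht0)

lemma integral_sqrt_one_sub_sq_div_sub_eq_integral_cos_sq {w : ℂ} (hw : w.im ≠ 0) :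
    ∫ s in (-1 : ℝ)..1, (√(1 - s ^ 2) : ℂ) / (s - w) =
      ∫ θ in (-(π / 2))..(π / 2), (cos θ : ℂ) ^ 2 / (sin θ - w) := by
  have hcont : Continuous fun s : ℝ => (√(1 - s ^ 2) : ℂ) / (s - w) :=
    (by fun_prop : Continuous fun s : ℝ => (√(1 - s ^ 2) : ℂ)).div (by fun_prop)
      (ofReal_sub_ne_zero hw)
  have h := integral_deriv_smul_comp (a := -(π / 2)) (b := π / 2)
    (fun θ _ => hasDerivAt_sin θ) continuous_cos.continuousOn hcont
  rw [sin_neg, sin_pi_div_two] at h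
  rw [← h]
  refine integral_congr fun θ hθ => ?_
  rw [uIcc_of_le (by linarith [pi_pos])] at hθ
  simp only [Function.comp_apply, Complex.real_smul]
  rw [← cos_sq', Real.sqrt_sq (cos_nonneg_of_mem_Icc hθ)]
  ring

theorem integral_sqrt_one_sub_sq_div_sub {w : ℂ} (hw : 0 < w.im) :
    ∃ r : ℂ, r ^ 2 = 1 - w ^ 2 ∧
      ∫ s in (-1 : ℝ)..1, (√(1 - s ^ 2) : ℂ) / (s - w) = π * (I * r - w) := by
  obtain ⟨t, ht, hsum⟩ := exists_im_neg_mul_add_inv_eq_two hw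
  have ht0 : t ≠ 0 := by rintro rfl; simp at ht
  have ht' : 0 < t⁻¹.im := by
    rw [Complex.inv_im]
    exact div_pos (neg_pos.2 ht) (Complex.normSq_pos.2 ht0)
  have hprod : t * t⁻¹ = 1 := mul_inv_cancel₀ ht0
  have hr : (w * (t - t⁻¹) / 2) ^ 2 = 1 - w ^ 2 := by
    linear_combination (w * (t + t⁻¹) + 2) / 4 * hsum - w ^ 2 * hprod
  refine ⟨w * (t - t⁻¹) / 2, hr, ?_⟩
  have hsin := sin_sub_ne_zero hsum hprod ht.ne ht'.ne'
  have hsplit : ∀ θ : ℝ, (cos θ : ℂ) ^ 2 / (sin θ - w) =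
      (1 - w ^ 2) * ((sin θ : ℂ) - w)⁻¹ - ((sin θ : ℂ) + w) := by
    intro θ
    have hsc : (sin θ : ℂ) ^ 2 + (cos θ : ℂ) ^ 2 = 1 := by exact_mod_cast sin_sq_add_cos_sq θ
    rw [div_eq_iff (hsin θ), sub_mul, mul_assoc, inv_mul_cancel₀ (hsin θ)]
    linear_combination hsc
  rw [integral_sqrt_one_sub_sq_div_sub_eq_integral_cos_sq hw.ne',
    integral_congr fun θ _ => hsplit θ, integral_sub,
    integral_const_mul, integral_inv_sin_sub hsum hprod ht ht',
    integral_add, integral_ofReal, integral_sin]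
  · rw [← hr]
    simp only [cos_neg, cos_pi_div_two, sub_self, Complex.ofReal_zero, integral_const,
      sub_neg_eq_add, add_halves, Complex.real_smul, zero_add]
    field_simp
  all_goals exact Continuous.intervalIntegrable (by fun_prop) _ _

lemma integral_sqrt_sq_sub_sq_div_sub (a : ℝ) {ρ : ℝ} (hρ : 0 < ρ) (lam : ℂ) :
    ∫ x in (a - ρ)..(a + ρ), (√(ρ ^ 2 - (a - x) ^ 2) : ℂ) / (x - lam) =
      ρ * ∫ s in (-1 : ℝ)..1, (√(1 - s ^ 2) : ℂ) / (s - (lam - a) / ρ) := by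
  have hρ' : (ρ : ℂ) ≠ 0 := by exact_mod_cast hρ.ne'
  have hscale : ∀ s : ℝ, (√(ρ ^ 2 - (a - (ρ * s + a)) ^ 2) : ℂ) / ((ρ * s + a : ℝ) - lam) =
      (√(1 - s ^ 2) : ℂ) / (s - (lam - a) / ρ) := by
    intro s
    rw [show ρ ^ 2 - (a - (ρ * s + a)) ^ 2 = ρ ^ 2 * (1 - s ^ 2) by ring,
      Real.sqrt_mul (by positivity), Real.sqrt_sq hρ.le]
    push_cast
    rw [show (ρ : ℂ) * s + a - lam = ρ * (s - (lam - a) / ρ) by field_simp; ring,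
      mul_div_mul_left _ _ hρ']
  have h := integral_comp_mul_add (a := -1) (b := 1)
    (fun x : ℝ => (√(ρ ^ 2 - (a - x) ^ 2) : ℂ) / (x - lam)) hρ.ne' a
  simp only [hscale] at h
  rw [h, Complex.real_smul, ← mul_assoc, ← Complex.ofReal_mul, mul_inv_cancel₀ hρ.ne',
    Complex.ofReal_one, one_mul]
  congr 1 <;> ring

lemma im_integral_div_sub_pos {f : ℝ → ℝ} {p q : ℝ} (hpq : p < q) (hf : ContinuousOn f (Icc p q))
    (hpos : ∀ x ∈ Ioo p q, 0 < f x) {lam : ℂ} (hlam : 0 < lam.im) :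
    0 < (∫ x in p..q, (f x : ℂ) / (x - lam)).im := by
  have hne : ∀ x : ℝ, (x : ℂ) - lam ≠ 0 := ofReal_sub_ne_zero hlam.ne'
  have hcont : ContinuousOn (fun x : ℝ => (f x : ℂ) / (x - lam)) (uIcc p q) := by
    rw [uIcc_of_le hpq.le]
    exact (Complex.continuous_ofReal.comp_continuousOn hf).div (by fun_prop) fun x _ => hne x
  have him : ∀ x : ℝ, ((f x : ℂ) / (x - lam)).im = f x * lam.im / Complex.normSq (x - lam) := by
    intro x
    simp only [Complex.div_im, Complex.ofReal_im, Complex.sub_re, Complex.ofReal_re, zero_mul,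
      zero_div, Complex.sub_im, zero_sub, mul_neg]
    ring
  rw [← RCLike.im_to_complex, ← intervalIntegral_im hcont.intervalIntegrable]
  refine intervalIntegral_pos_of_pos_on
    (Complex.continuous_im.comp_continuousOn hcont).intervalIntegrable (fun x hx => ?_) hpq
  rw [RCLike.im_to_complex, him]
  exact div_pos (mul_pos (hpos x hx) hlam) (Complex.normSq_pos.2 (hne x))

lemma eq_of_quadratic_of_im_pos {b : ℝ} (hb : b ≠ 0) {c K K' : ℂ} (hK : 0 < K.im)
    (hK' : 0 < K'.im) (hKc : (b : ℂ) ^ 2 * K ^ 2 - c * K + 1 = 0)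
    (hK'c : (b : ℂ) ^ 2 * K' ^ 2 - c * K' + 1 = 0) : K' = K := by
  by_contra hne
  have hsum : (b : ℂ) ^ 2 * (K + K') = c :=
    mul_left_cancel₀ (sub_ne_zero.2 hne) (by linear_combination hK'c - hKc)
  have hprod : (b : ℂ) ^ 2 * K * K' = 1 := by linear_combination -hK'c + K' * hsum
  have hbK : (b : ℂ) ^ 2 * K ≠ 0 :=
    mul_ne_zero (by exact_mod_cast pow_ne_zero 2 hb) fun h => by simp [h] at hK
  have : K'.im < 0 := by
    rw [eq_inv_of_mul_eq_one_right hprod, Complex.inv_im, ← Complex.ofReal_pow,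
      Complex.im_ofReal_mul]
    exact div_neg_of_neg_of_pos (neg_neg_of_pos (mul_pos (by positivity) hK))
      (Complex.normSq_pos.2 (by exact_mod_cast hbK))
  linarith

/-- The Stieltjes transform
`K = (1/(2πb²)) ∫_{a−2b}^{a+2b} √(4b² − (a−x)²)/(x − λ) dx` of the semicircle-type
density satisfies `Im K > 0` and `K (a − λ − b² K) = 1`; that is, it is the unique
root with positive imaginary part of `b² K² − (a − λ) K + 1 = 0`. -/
theorem stmt8 (a : ℝ) (b : ℝ) (hb : 0 < b) (lam : ℂ) (hlam : 0 < lam.im)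
    (K : ℂ)
    (hK : K = ((1 / (2 * Real.pi * b ^ 2) : ℝ) : ℂ) *
      ∫ x in (a - 2 * b)..(a + 2 * b),
        ((Real.sqrt (4 * b ^ 2 - (a - x) ^ 2) : ℝ) : ℂ) / ((x : ℂ) - lam)) :
    0 < K.im ∧
    K * ((a : ℂ) - lam - (b : ℂ) ^ 2 * K) = 1 ∧
    (b : ℂ) ^ 2 * K ^ 2 - ((a : ℂ) - lam) * K + 1 = 0 ∧
    ∀ K' : ℂ, 0 < K'.im → (b : ℂ) ^ 2 * K' ^ 2 - ((a : ℂ) - lam) * K' + 1 = 0 → K' = K := by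
  set w := (lam - a) / ((2 * b : ℝ) : ℂ) with hw_def
  have hb' : (b : ℂ) ≠ 0 := by exact_mod_cast hb.ne'
  have hw : 0 < w.im := by
    rw [Complex.div_ofReal_im]
    simpa using div_pos hlam (by positivity : (0 : ℝ) < 2 * b)
  obtain ⟨r, hr, hI⟩ := integral_sqrt_one_sub_sq_div_sub hw
  have hscale := integral_sqrt_sq_sub_sq_div_sub a (by positivity : (0 : ℝ) < 2 * b) lam
  rw [mul_pow, show (2 : ℝ) ^ 2 = 4 by norm_num, ← hw_def, hI] at hscale
  have hbK : b * K = I * r - w := by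
    rw [hK, hscale]
    push_cast
    field_simp
  have hquad : (b : ℂ) ^ 2 * K ^ 2 - ((a : ℂ) - lam) * K + 1 = 0 := by
    have ha : (a : ℂ) - lam = -2 * b * w := by rw [hw_def]; push_cast; field_simp; ring
    rw [ha]
    linear_combination (b * K + I * r + w) * hbK - hr + r ^ 2 * Complex.I_sq
  have hKim : 0 < K.im := by
    rw [hK, Complex.im_ofReal_mul]
    exact mul_pos (by positivity) (im_integral_div_sub_pos (by linarith) (by fun_prop)
      (fun x hx => Real.sqrt_pos.2 (by nlinarith [hx.1, hx.2])) hlam)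
  exact ⟨hKim, by linear_combination -hquad, hquad,
    fun K' hK' hK'quad => eq_of_quadratic_of_im_pos hb.ne' hKim hK' hquad hK'quad⟩
end

section
/- Let a ∈ ℝ, b > 0, and let K : ℂ → ℂ be any function such that for every λ with Im λ > 0, Im K(λ) > 0 and K(λ) · (a − λ − b² K(λ)) = 1. Then for every real x with |a − x| < 2b, the limit lim_{ε→0+} K(x + iε) exists and equals (a − x)/(2b²) + i·√(4b² − (a−x)²)/(2b²). -/
open Filter Topology Complex

/- Completing the square in `b² K² − (a − λ) K + 1 = 0` gives `w² = (a − λ)² − 4b²` for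
`w = 2b² K(λ) − (a − λ)`, and `Im w = 2b² Im K(λ) + Im λ > 0`. As `λ → x` the square `w²` tends to
`(a − x)² − 4b² = (i √(4b² − (a − x)²))²`, and the only square root of this number in the closed upper
half plane is `i √(4b² − (a − x)²)`; continuity of that branch of the square root forces the limit. -/

theorem sq_two_mul_mul_sub_eq_of_mul_sub_mul_eq_one {R : Type*} [CommRing R] {k m q : R}
    (h : k * (m - q * k) = 1) : (2 * q * k - m) ^ 2 = m ^ 2 - 4 * q := by
  linear_combination (-4 * q) * h

namespace Complex

theorem norm_sub_le_norm_sq_sub_div_im {w z : ℂ} (hz : 0 < z.im) (hw : 0 ≤ w.im) :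
    ‖w - z‖ ≤ ‖w ^ 2 - z ^ 2‖ / z.im := by
  have hsum : z.im ≤ ‖w + z‖ := by
    calc z.im ≤ (w + z).im := by simp only [add_im]; linarith
      _ ≤ ‖w + z‖ := (le_abs_self _).trans (abs_im_le_norm _)
  rw [le_div_iff₀ hz]
  calc ‖w - z‖ * z.im ≤ ‖w - z‖ * ‖w + z‖ := by gcongr
    _ = ‖w ^ 2 - z ^ 2‖ := by rw [← norm_mul]; ring_nf

theorem tendsto_of_sq_tendsto_of_im_nonneg {α : Type*} {l : Filter α} {w : α → ℂ} {z : ℂ}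
    (hz : 0 < z.im) (hw : ∀ᶠ t in l, 0 ≤ (w t).im)
    (hsq : Tendsto (fun t => w t ^ 2) l (𝓝 (z ^ 2))) : Tendsto w l (𝓝 z) := by
  rw [tendsto_iff_norm_sub_tendsto_zero]
  have hbound : Tendsto (fun t => ‖w t ^ 2 - z ^ 2‖ / z.im) l (𝓝 0) := by
    simpa using ((tendsto_iff_norm_sub_tendsto_zero.mp hsq).div_const z.im)
  refine squeeze_zero' (Eventually.of_forall fun t => norm_nonneg _) ?_ hbound
  filter_upwards [hw] with t ht
  exact norm_sub_le_norm_sq_sub_div_im hz ht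

end Complex

theorem tendsto_comp_of_mul_sub_mul_eq_one {α : Type*} {l : Filter α} {a b : ℝ} (hb : b ≠ 0)
    {K : ℂ → ℂ} (hK : ∀ lam : ℂ, 0 < lam.im →
      0 < (K lam).im ∧ K lam * ((a : ℂ) - lam - (b : ℂ) ^ 2 * K lam) = 1)
    {lam : α → ℂ} {μ z : ℂ} (hlam : Tendsto lam l (𝓝 μ)) (hlam_im : ∀ᶠ t in l, 0 < (lam t).im)
    (hz : 0 < z.im) (hz_sq : z ^ 2 = (a - μ) ^ 2 - 4 * (b : ℂ) ^ 2) :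
    Tendsto (fun t => K (lam t)) l (𝓝 ((z + (a - μ)) / (2 * (b : ℂ) ^ 2))) := by
  set w : α → ℂ := fun t => 2 * (b : ℂ) ^ 2 * K (lam t) - (a - lam t)
  have hsub : Tendsto (fun t => (a : ℂ) - lam t) l (𝓝 (a - μ)) := hlam.const_sub _
  have hw_im : ∀ᶠ t in l, 0 ≤ (w t).im := by
    filter_upwards [hlam_im] with t ht
    have : (w t).im = 2 * b ^ 2 * (K (lam t)).im + (lam t).im := by
      simp [w, ← ofReal_pow]
    nlinarith [(hK _ ht).1]
  have hw_sq : Tendsto (fun t => w t ^ 2) l (𝓝 (z ^ 2)) := by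
    rw [hz_sq]
    refine ((hsub.pow 2).sub_const _).congr' ?_
    filter_upwards [hlam_im] with t ht
    exact (sq_two_mul_mul_sub_eq_of_mul_sub_mul_eq_one (hK _ ht).2).symm
  have hw := tendsto_of_sq_tendsto_of_im_nonneg hz hw_im hw_sq
  have hb0 : 2 * (b : ℂ) ^ 2 ≠ 0 := by simp [hb]
  convert (hw.add hsub).div_const (2 * (b : ℂ) ^ 2) using 2
  rw [eq_div_iff hb0]
  ring

/-- If `K : ℂ → ℂ` satisfies `Im K(λ) > 0` and `K(λ)(a − λ − b² K(λ)) = 1`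
for every `λ` in the upper half plane, then for every real `x` with `|a − x| < 2b` the
boundary value `lim_{ε→0+} K(x + iε)` exists and equals
`(a−x)/(2b²) + i √(4b² − (a−x)²)/(2b²)`. -/
theorem stmt9 (a : ℝ) (b : ℝ) (hb : 0 < b) (K : ℂ → ℂ)
    (hK : ∀ lam : ℂ, 0 < lam.im →
      0 < (K lam).im ∧ K lam * ((a : ℂ) - lam - (b : ℂ) ^ 2 * K lam) = 1) :
    ∀ x : ℝ, |a - x| < 2 * b →
      Tendsto (fun ε : ℝ => K ((x : ℂ) + (ε : ℂ) * Complex.I))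
        (nhdsWithin 0 (Set.Ioi 0))
        (nhds (((a - x) / (2 * b ^ 2) : ℝ) +
          Complex.I * ((Real.sqrt (4 * b ^ 2 - (a - x) ^ 2) / (2 * b ^ 2) : ℝ) : ℂ))) := by
  intro x hx
  set s := Real.sqrt (4 * b ^ 2 - (a - x) ^ 2)
  have hs2 : s ^ 2 = 4 * b ^ 2 - (a - x) ^ 2 := Real.sq_sqrt (by nlinarith [abs_lt.mp hx])
  have hs : 0 < s := Real.sqrt_pos.mpr (by nlinarith [abs_lt.mp hx])
  have hlam : Tendsto (fun ε : ℝ => (x : ℂ) + ε * I) (𝓝[>] 0) (𝓝 x) :=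
    ((by fun_prop : Continuous fun ε : ℝ => (x : ℂ) + ε * I).tendsto' 0 _ (by simp))
      |>.mono_left nhdsWithin_le_nhds
  have hlam_im : ∀ᶠ ε : ℝ in 𝓝[>] 0, 0 < ((x : ℂ) + ε * I).im := by
    filter_upwards [self_mem_nhdsWithin] with ε hε
    simpa using hε
  have hz_sq : (I * s) ^ 2 = ((a : ℂ) - x) ^ 2 - 4 * (b : ℂ) ^ 2 := by
    rw [mul_pow, I_sq, ← ofReal_pow, hs2]; push_cast; ring
  convert tendsto_comp_of_mul_sub_mul_eq_one hb.ne' hK hlam hlam_im (by simpa using hs) hz_sq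
    using 2
  push_cast
  ring
end

section
/- Let (a_n)_{n≥0} be a real sequence, (b_n)_{n≥0} a positive real sequence, and let P_n, Q_n be the first- and second-type polynomials of the associated Jacobi matrix. Fix n ≥ 1, a real number x, and real numbers D and B, and set K = D + iB. If P_n(x) + P_{n-1}(x) b_{n-1} K ≠ 0, then Im( −(Q_n(x) + Q_{n-1}(x) b_{n-1} K)/(P_n(x) + P_{n-1}(x) b_{n-1} K) ) = B / ( (P_n(x) + b_{n-1} P_{n-1}(x) D)² + (b_{n-1} P_{n-1}(x) B)² ). -/
/-!
The two solutions `P`, `Q` of the three-term recurrence have constant Wronskian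
`b m (P_{m+1} Q_m - P_m Q_{m+1}) = -1`. A Möbius map `z ↦ -(q + q' z)/(p + p' z)` with real
coefficients multiplies imaginary parts by `(q p' - q' p) / |p + p' z|²`, and with `z = b_{n-1} K`
the Wronskian turns this factor times `Im z = b_{n-1} B` into `B / |P_n + P_{n-1} b_{n-1} K|²`.
-/

section Wronskian

variable {R : Type*} [CommRing R]

def jacobiWronskian (b p q : ℕ → R) (m : ℕ) : R :=
  b m * (p (m + 1) * q m - p m * q (m + 1))

theorem jacobiWronskian_eq_jacobiWronskian_zero (a b : ℕ → R) (x : R) {p q : ℕ → R}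
    (hp : ∀ n, b n * p n + a (n + 1) * p (n + 1) + b (n + 1) * p (n + 2) = x * p (n + 1))
    (hq : ∀ n, b n * q n + a (n + 1) * q (n + 1) + b (n + 1) * q (n + 2) = x * q (n + 1))
    (m : ℕ) : jacobiWronskian b p q m = jacobiWronskian b p q 0 := by
  induction m with
  | zero => rfl
  | succ k ih =>
    rw [← ih]
    unfold jacobiWronskian
    linear_combination q (k + 1) * hp k - p (k + 1) * hq k

end Wronskian

theorem Complex.im_neg_div_ofReal_add_ofReal_mul (p p' q q' : ℝ) (z : ℂ) :
    (-((q + q' * z) / (p + p' * z))).im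
      = (q * p' - q' * p) * z.im / Complex.normSq (p + p' * z) := by
  rw [Complex.neg_im, Complex.div_im]
  simp only [Complex.add_re, Complex.add_im, Complex.ofReal_re, Complex.ofReal_im,
    Complex.re_ofReal_mul, Complex.im_ofReal_mul]
  ring

theorem stmt11_general (a : ℕ → ℝ) (b : ℕ → ℝ) (hb : ∀ n, 0 < b n)
    (P Q : ℕ → ℝ → ℝ)
    (hP0 : ∀ x : ℝ, P 0 x = 1)
    (hQ0 : ∀ x : ℝ, Q 0 x = 0)
    (hQ1 : ∀ x : ℝ, Q 1 x = 1 / b 0)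
    (hPrec : ∀ (n : ℕ) (x : ℝ),
      b n * P n x + a (n + 1) * P (n + 1) x + b (n + 1) * P (n + 2) x = x * P (n + 1) x)
    (hQrec : ∀ (n : ℕ) (x : ℝ),
      b n * Q n x + a (n + 1) * Q (n + 1) x + b (n + 1) * Q (n + 2) x = x * Q (n + 1) x)
    (n : ℕ) (hn : 1 ≤ n) (x D B : ℝ) (K : ℂ) (hKdef : K = (D : ℂ) + (B : ℂ) * Complex.I) :
    (-(((Q n x : ℂ) + (Q (n - 1) x : ℂ) * (b (n - 1) : ℂ) * K) /
        ((P n x : ℂ) + (P (n - 1) x : ℂ) * (b (n - 1) : ℂ) * K))).im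
      = B / ((P n x + b (n - 1) * P (n - 1) x * D) ^ 2
              + (b (n - 1) * P (n - 1) x * B) ^ 2) := by
  obtain ⟨m, rfl⟩ := Nat.exists_eq_add_of_le' hn
  have hW : jacobiWronskian b (P · x) (Q · x) m = -1 := by
    rw [jacobiWronskian_eq_jacobiWronskian_zero a b x (hPrec · x) (hQrec · x), jacobiWronskian,
      hP0, hQ0, hQ1]
    field_simp [(hb 0).ne']
    ring
  unfold jacobiWronskian at hW
  rw [Nat.add_sub_cancel, mul_assoc, mul_assoc, Complex.im_neg_div_ofReal_add_ofReal_mul,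
    Complex.normSq_apply, hKdef]
  simp only [Complex.add_re, Complex.add_im, Complex.ofReal_re, Complex.ofReal_im,
    Complex.mul_re, Complex.mul_im, Complex.I_re, Complex.I_im]
  congr 1
  · linear_combination (-B) * hW
  · ring

/-- With `K = D + iB`, the imaginary part of
`−(Q_n(x) + Q_{n-1}(x) b_{n-1} K)/(P_n(x) + P_{n-1}(x) b_{n-1} K)` equals
`B / ((P_n(x) + b_{n-1} P_{n-1}(x) D)² + (b_{n-1} P_{n-1}(x) B)²)`. -/
theorem stmt11 (a : ℕ → ℝ) (b : ℕ → ℝ) (hb : ∀ n, 0 < b n)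
    (P Q : ℕ → ℝ → ℝ)
    (hP0 : ∀ x : ℝ, P 0 x = 1)
    (hP1 : ∀ x : ℝ, P 1 x = (x - a 0) / b 0)
    (hQ0 : ∀ x : ℝ, Q 0 x = 0)
    (hQ1 : ∀ x : ℝ, Q 1 x = 1 / b 0)
    (hPrec : ∀ (n : ℕ) (x : ℝ),
      b n * P n x + a (n + 1) * P (n + 1) x + b (n + 1) * P (n + 2) x = x * P (n + 1) x)
    (hQrec : ∀ (n : ℕ) (x : ℝ),
      b n * Q n x + a (n + 1) * Q (n + 1) x + b (n + 1) * Q (n + 2) x = x * Q (n + 1) x)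
    (n : ℕ) (hn : 1 ≤ n) (x D B : ℝ) (K : ℂ) (hKdef : K = (D : ℂ) + (B : ℂ) * Complex.I)
    (hden : ((P n x : ℂ) + (P (n - 1) x : ℂ) * (b (n - 1) : ℂ) * K) ≠ 0) :
    (-(((Q n x : ℂ) + (Q (n - 1) x : ℂ) * (b (n - 1) : ℂ) * K) /
        ((P n x : ℂ) + (P (n - 1) x : ℂ) * (b (n - 1) : ℂ) * K))).im
      = B / ((P n x + b (n - 1) * P (n - 1) x * D) ^ 2
              + (b (n - 1) * P (n - 1) x * B) ^ 2) :=
  stmt11_general a b hb P Q hP0 hQ0 hQ1 hPrec hQrec n hn x D B K hKdef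
end

section
/- Let (a_n)_{n≥0} be a real sequence and (b_n)_{n≥0} a positive real sequence satisfying b_k ≥ b_{k−1} and |a_k − a_{k−1}| ≤ 2(b_k − b_{k−1}) for all k ≥ 1, and let P_n be the first-type polynomials of the associated Jacobi matrix. Then for every n ≥ 1 and every real x with |x − a_n| ≥ 2 b_n, one has |P_n(x)| − |P_{n−1}(x)| ≥ 1. -/
/-!
The condition `|x - a n| ≥ 2 b n` propagates downwards: since
`|a k - a (k-1)| ≤ 2 (b k - b (k-1))`, it passes from `k` to `k - 1`. Under it the
recurrence gives `b n |P (n+1)| ≥ |x - a n| |P n| - b (n-1) |P (n-1)| ≥ b n (2 |P n| - |P (n-1)|)`,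
so the increments `|P n| - |P (n-1)|` do not decrease, and the first one is
`|x - a 0| / b 0 - 1 ≥ 1`.
-/

theorem abs_sub_abs_le_abs_sub_abs_of_recurrence {β β' t p q r : ℝ} (hβ' : 0 < β')
    (hβ : |β| ≤ β') (hrec : β * p + β' * r = t * q) (ht : 2 * β' ≤ |t|) :
    |q| - |p| ≤ |r| - |q| := by
  have hr : β' * |r| = |t * q - β * p| := by
    rw [← abs_of_pos hβ', ← abs_mul, ← hrec, add_sub_cancel_left]
  have key : β' * (2 * |q| - |p|) ≤ β' * |r| :=
    calc β' * (2 * |q| - |p|) = 2 * β' * |q| - β' * |p| := by ring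
      _ ≤ |t| * |q| - |β| * |p| := by gcongr
      _ = |t * q| - |β * p| := by rw [abs_mul, abs_mul]
      _ ≤ β' * |r| := hr ▸ abs_sub_abs_le_abs_sub _ _
  linarith [le_of_mul_le_mul_left key hβ']

theorem two_mul_le_abs_sub_of_succ {a b : ℕ → ℝ} {k : ℕ}
    (hab : |a (k + 1) - a k| ≤ 2 * (b (k + 1) - b k)) {x : ℝ}
    (hx : 2 * b (k + 1) ≤ |x - a (k + 1)|) : 2 * b k ≤ |x - a k| := by
  have : |x - a (k + 1)| - |x - a k| ≤ |a (k + 1) - a k| := by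
    simpa [abs_sub_comm] using abs_sub_abs_le_abs_sub (x - a (k + 1)) (x - a k)
  linarith

theorem stmt12_general (a : ℕ → ℝ) (b : ℕ → ℝ) (hb : ∀ n, 0 < b n)
    (ha : ∀ k : ℕ, 1 ≤ k → |a k - a (k - 1)| ≤ 2 * (b k - b (k - 1)))
    (P : ℕ → ℝ → ℝ)
    (hP0 : ∀ x : ℝ, P 0 x = 1)
    (hP1 : ∀ x : ℝ, P 1 x = (x - a 0) / b 0)
    (hPrec : ∀ (n : ℕ) (x : ℝ),
      b n * P n x + a (n + 1) * P (n + 1) x + b (n + 1) * P (n + 2) x = x * P (n + 1) x)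
    (n : ℕ) (hn : 1 ≤ n) (x : ℝ) (hx : 2 * b n ≤ |x - a n|) :
    1 ≤ |P n x| - |P (n - 1) x| := by
  have hab (k : ℕ) : |a (k + 1) - a k| ≤ 2 * (b (k + 1) - b k) := ha (k + 1) k.succ_pos
  induction n, hn using Nat.le_induction with
  | base =>
    have hx0 : 2 * b 0 ≤ |x - a 0| := two_mul_le_abs_sub_of_succ (hab 0) hx
    rw [hP1, hP0, abs_one, abs_div, abs_of_pos (hb 0), le_sub_iff_add_le, le_div_iff₀ (hb 0)]
    linarith
  | succ n hn IH =>
    obtain ⟨m, rfl⟩ := Nat.exists_eq_add_of_le' hn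
    have hmono : |b m| ≤ b (m + 1) := by
      rw [abs_of_pos (hb m)]
      linarith [abs_nonneg (a (m + 1) - a m), hab m]
    have hxm : 2 * b (m + 1) ≤ |x - a (m + 1)| := two_mul_le_abs_sub_of_succ (hab (m + 1)) hx
    calc 1 ≤ |P (m + 1) x| - |P m x| := IH hxm
      _ ≤ |P (m + 2) x| - |P (m + 1) x| :=
        abs_sub_abs_le_abs_sub_abs_of_recurrence (hb (m + 1)) hmono
          (by linarith [hPrec m x]) hxm

/-- If `b_k ≥ b_{k-1}` and `|a_k − a_{k-1}| ≤ 2(b_k − b_{k-1})` for all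
`k ≥ 1`, then for every `n ≥ 1` and every real `x` with `|x − a_n| ≥ 2 b_n` one has
`|P_n(x)| − |P_{n-1}(x)| ≥ 1`. -/
theorem stmt12 (a : ℕ → ℝ) (b : ℕ → ℝ) (hb : ∀ n, 0 < b n)
    (hmono : ∀ k : ℕ, 1 ≤ k → b (k - 1) ≤ b k)
    (ha : ∀ k : ℕ, 1 ≤ k → |a k - a (k - 1)| ≤ 2 * (b k - b (k - 1)))
    (P : ℕ → ℝ → ℝ)
    (hP0 : ∀ x : ℝ, P 0 x = 1)
    (hP1 : ∀ x : ℝ, P 1 x = (x - a 0) / b 0)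
    (hPrec : ∀ (n : ℕ) (x : ℝ),
      b n * P n x + a (n + 1) * P (n + 1) x + b (n + 1) * P (n + 2) x = x * P (n + 1) x)
    (n : ℕ) (hn : 1 ≤ n) (x : ℝ) (hx : 2 * b n ≤ |x - a n|) :
    1 ≤ |P n x| - |P (n - 1) x| :=
  stmt12_general a b hb ha P hP0 hP1 hPrec n hn x hx
end

section
/- Let (a_n)_{n≥0} be a real sequence, (b_n)_{n≥0} a positive real sequence, and let P_n be the first-type polynomials of the associated Jacobi matrix. Then for every n ≥ 1 and every real x with |x − a_n| < 2 b_n, one has b_n P_n(x)² − b_{n−1} P_{n−1}(x) P_{n+1}(x) > 0. -/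
/-!
Eliminating `P (n + 1)` with the recurrence turns `b n` times the Turán determinant into the
binary quadratic form `b n ^ 2 u ^ 2 - (x - a n) u v + v ^ 2` in `u = P n x`,
`v = b (n-1) P (n-1) x`, which is positive definite exactly when `|x - a n| < 2 b n`.
It remains to see that `u` and `v` never vanish together:
otherwise the recurrence, run backwards, would force `P 0 x = 0`.
-/

theorem quadratic_form_pos_of_abs_lt {B t u v : ℝ} (ht : |t| < 2 * B) (huv : u ≠ 0 ∨ v ≠ 0) :
    0 < B ^ 2 * u ^ 2 - t * u * v + v ^ 2 := by
  have hdisc : 0 < 4 * B ^ 2 - t ^ 2 := by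
    have : t ^ 2 < (2 * B) ^ 2 := sq_lt_sq' (abs_lt.mp ht).1 (abs_lt.mp ht).2
    linarith
  have hsum : 4 * (B ^ 2 * u ^ 2 - t * u * v + v ^ 2) =
      (2 * v - t * u) ^ 2 + (4 * B ^ 2 - t ^ 2) * u ^ 2 := by
    ring
  by_cases hu : u = 0
  · have hv : v ≠ 0 := huv.resolve_left (not_not.mpr hu)
    subst hu
    have hv2 : 0 < v ^ 2 := by positivity
    simpa using hv2
  · have hdef : 0 < (4 * B ^ 2 - t ^ 2) * u ^ 2 := mul_pos hdisc (by positivity)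
    linarith [sq_nonneg (2 * v - t * u)]

section ThreeTermRecurrence

variable {R : Type*} [CommRing R] {a b : ℕ → R} {x : R} {p : ℕ → R}

theorem not_consecutive_eq_zero_of_recurrence [NoZeroDivisors R] (hb : ∀ n, b n ≠ 0)
    (h0 : p 0 ≠ 0)
    (hrec : ∀ n, b n * p n + a (n + 1) * p (n + 1) + b (n + 1) * p (n + 2) = x * p (n + 1))
    (n : ℕ) : ¬(p n = 0 ∧ p (n + 1) = 0) := by
  induction n with
  | zero => exact fun h => h0 h.1
  | succ n ih =>
    rintro ⟨h1, h2⟩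
    have hbp : b n * p n = 0 := by simpa [h1, h2] using hrec n
    exact ih ⟨(mul_eq_zero.mp hbp).resolve_left (hb n), h1⟩

theorem mul_turan_eq_of_recurrence
    (hrec : ∀ n, b n * p n + a (n + 1) * p (n + 1) + b (n + 1) * p (n + 2) = x * p (n + 1))
    (m : ℕ) :
    b (m + 1) * (b (m + 1) * p (m + 1) ^ 2 - b m * p m * p (m + 2)) =
      b (m + 1) ^ 2 * p (m + 1) ^ 2 - (x - a (m + 1)) * p (m + 1) * (b m * p m)
        + (b m * p m) ^ 2 := by
  linear_combination (-(b m * p m)) * hrec m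

end ThreeTermRecurrence

theorem stmt14_general (a : ℕ → ℝ) (b : ℕ → ℝ) (hb : ∀ n, 0 < b n)
    (P : ℕ → ℝ → ℝ)
    (hP0 : ∀ x : ℝ, P 0 x = 1)
    (hPrec : ∀ (n : ℕ) (x : ℝ),
      b n * P n x + a (n + 1) * P (n + 1) x + b (n + 1) * P (n + 2) x = x * P (n + 1) x)
    (n : ℕ) (hn : 1 ≤ n) (x : ℝ) (hx : |x - a n| < 2 * b n) :
    0 < b n * P n x ^ 2 - b (n - 1) * P (n - 1) x * P (n + 1) x := by
  obtain ⟨m, rfl⟩ : ∃ m, n = m + 1 := Nat.exists_eq_add_of_le' hn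
  have hrec : ∀ k, b k * P k x + a (k + 1) * P (k + 1) x + b (k + 1) * P (k + 2) x =
      x * P (k + 1) x := fun k => hPrec k x
  have hnonzero : P (m + 1) x ≠ 0 ∨ b m * P m x ≠ 0 := by
    have := not_consecutive_eq_zero_of_recurrence (fun k => (hb k).ne') (by simp [hP0]) hrec m
    by_contra! h
    exact this ⟨(mul_eq_zero.mp h.2).resolve_left (hb m).ne', h.1⟩
  have hpos := quadratic_form_pos_of_abs_lt hx hnonzero
  rw [← mul_turan_eq_of_recurrence hrec m] at hpos
  exact pos_of_mul_pos_right hpos (hb (m + 1)).le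

/-- Inside the interval `|x − a_n| < 2 b_n` the Turán-type determinant
`b_n P_n(x)² − b_{n-1} P_{n-1}(x) P_{n+1}(x)` is strictly positive. -/
theorem stmt14 (a : ℕ → ℝ) (b : ℕ → ℝ) (hb : ∀ n, 0 < b n)
    (P : ℕ → ℝ → ℝ)
    (hP0 : ∀ x : ℝ, P 0 x = 1)
    (hP1 : ∀ x : ℝ, P 1 x = (x - a 0) / b 0)
    (hPrec : ∀ (n : ℕ) (x : ℝ),
      b n * P n x + a (n + 1) * P (n + 1) x + b (n + 1) * P (n + 2) x = x * P (n + 1) x)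
    (n : ℕ) (hn : 1 ≤ n) (x : ℝ) (hx : |x - a n| < 2 * b n) :
    0 < b n * P n x ^ 2 - b (n - 1) * P (n - 1) x * P (n + 1) x :=
  stmt14_general a b hb P hP0 hPrec n hn x hx
end

section
/- Let (a_n)_{n≥0} be a real sequence, (b_n)_{n≥0} a positive real sequence, and let P_n be the first-type polynomials of the associated Jacobi matrix. Let 0 < q < 1, n ≥ 1, and x ∈ ℝ with |x − a_n| ≤ 2 b_n q. Then (1 − q) · b_n (P_{n+1}(x)² + P_n(x)²) ≤ b_n P_n(x)² − b_{n−1} P_{n−1}(x) P_{n+1}(x) ≤ (1 + q) · b_n (P_{n+1}(x)² + P_n(x)²). -/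
/-! The recurrence at `n` rewrites `b_n P_n² − b_{n−1} P_{n−1} P_{n+1}` as
`b_n (P_{n+1}² + P_n²) − (x − a_n) P_n P_{n+1}`, and by `2 |P_n P_{n+1}| ≤ P_n² + P_{n+1}²` the
hypothesis `|x − a_n| ≤ 2 b_n q` bounds the cross term by `q b_n (P_{n+1}² + P_n²)`. -/

theorem abs_mul_mul_le_of_abs_le {t β q u v : ℝ} (ht : |t| ≤ 2 * β * q) :
    |t * (u * v)| ≤ q * (β * (v ^ 2 + u ^ 2)) := by
  have hβq : 0 ≤ β * q := by linarith [abs_nonneg t]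
  calc |t * (u * v)| = |t| * (|u| * |v|) := by rw [abs_mul, abs_mul]
    _ ≤ 2 * β * q * (|u| * |v|) := by gcongr
    _ = β * q * (2 * |u| * |v|) := by ring
    _ ≤ β * q * (|u| ^ 2 + |v| ^ 2) := by gcongr; exact two_mul_le_add_sq _ _
    _ = q * (β * (v ^ 2 + u ^ 2)) := by rw [sq_abs, sq_abs]; ring

theorem abs_three_term_form_sub_le {a b c x q p u v : ℝ}
    (hrec : c * p + a * u + b * v = x * u) (hx : |x - a| ≤ 2 * b * q) :
    |b * u ^ 2 - c * p * v - b * (v ^ 2 + u ^ 2)| ≤ q * (b * (v ^ 2 + u ^ 2)) := by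
  have hform : b * u ^ 2 - c * p * v - b * (v ^ 2 + u ^ 2) = -((x - a) * (u * v)) := by
    linear_combination (-v) * hrec
  rw [hform, abs_neg]
  exact abs_mul_mul_le_of_abs_le hx

theorem stmt16_general (a : ℕ → ℝ) (b : ℕ → ℝ)
    (P : ℕ → ℝ → ℝ)
    (hPrec : ∀ (n : ℕ) (x : ℝ),
      b n * P n x + a (n + 1) * P (n + 1) x + b (n + 1) * P (n + 2) x = x * P (n + 1) x)
    (q : ℝ)
    (n : ℕ) (hn : 1 ≤ n) (x : ℝ) (hx : |x - a n| ≤ 2 * b n * q) :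
    (1 - q) * (b n * (P (n + 1) x ^ 2 + P n x ^ 2))
        ≤ b n * P n x ^ 2 - b (n - 1) * P (n - 1) x * P (n + 1) x ∧
    b n * P n x ^ 2 - b (n - 1) * P (n - 1) x * P (n + 1) x
        ≤ (1 + q) * (b n * (P (n + 1) x ^ 2 + P n x ^ 2)) := by
  obtain ⟨m, rfl⟩ : ∃ m, n = m + 1 := ⟨n - 1, by omega⟩
  have hbound := abs_le.mp (abs_three_term_form_sub_le (hPrec m x) hx)
  rw [Nat.add_sub_cancel]
  constructor <;> linarith [hbound.1, hbound.2]

/-- If `0 < q < 1` and `|x − a_n| ≤ 2 b_n q`, then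
`(1−q) b_n (P_{n+1}² + P_n²) ≤ b_n P_n² − b_{n-1} P_{n-1} P_{n+1} ≤ (1+q) b_n (P_{n+1}² + P_n²)`. -/
theorem stmt16 (a : ℕ → ℝ) (b : ℕ → ℝ) (hb : ∀ n, 0 < b n)
    (P : ℕ → ℝ → ℝ)
    (hP0 : ∀ x : ℝ, P 0 x = 1)
    (hP1 : ∀ x : ℝ, P 1 x = (x - a 0) / b 0)
    (hPrec : ∀ (n : ℕ) (x : ℝ),
      b n * P n x + a (n + 1) * P (n + 1) x + b (n + 1) * P (n + 2) x = x * P (n + 1) x)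
    (q : ℝ) (hq0 : 0 < q) (hq1 : q < 1)
    (n : ℕ) (hn : 1 ≤ n) (x : ℝ) (hx : |x - a n| ≤ 2 * b n * q) :
    (1 - q) * (b n * (P (n + 1) x ^ 2 + P n x ^ 2))
        ≤ b n * P n x ^ 2 - b (n - 1) * P (n - 1) x * P (n + 1) x ∧
    b n * P n x ^ 2 - b (n - 1) * P (n - 1) x * P (n + 1) x
        ≤ (1 + q) * (b n * (P (n + 1) x ^ 2 + P n x ^ 2)) :=
  stmt16_general a b P hPrec q n hn x hx
end

section
/- Let (a_n)_{n≥0} be a real sequence and (b_n)_{n≥0} a positive real sequence such that: (1) b_n → +∞; (2) a_n/b_n → s with |s| < 2; (3) b_n/b_{n+1} → 1; (4) the sequences (b_{n−1}/b_n − b_{n−2}/b_{n−1}), (1/b_n − 1/b_{n−1}), and (a_n/b_n − a_{n−1}/b_{n−1}) are absolutely summable. Let P_n be the first-type polynomials of the associated Jacobi matrix and Δ_n(x) = b_n P_n(x)² − b_{n−1} P_{n−1}(x) P_{n+1}(x). Then for every finite interval [a,b] there exist a constant C and an index N such that Δ_n(x) ≤ C for all n ≥ N and all x ∈ [a,b].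 -/
/-!
By the recurrence, `Δ_{n+1}` is the quadratic form
`Q_{n+1} = b_{n+1} (P_{n+1}² + P_{n+2}²) - (x - a_{n+1}) P_{n+1} P_{n+2}` in `(P_{n+1}, P_{n+2})`.
For some `δ > 0` and all large `n`, `|x - a_n| ≤ (2 - 4δ) b_n` uniformly on `[A, B]`, so this form
dominates `δ (b_{n+1} P_{n+1}² + b_{n+2} P_{n+2}²)`. Then `F_n = Q_{n+1} + (b_n - b_{n+1}) P_{n+1}²`
is at least `Q_{n+1} / 2` and satisfies `F_{n+1} ≤ (1 + c_n) F_n` with `(c_n)` summable by (4), so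
`F_n ≤ F_N exp (∑ c_k)`, and `F_N` is bounded on `[A, B]` by continuity.
-/

open Filter Topology

theorem le_mul_exp_tsum_of_le_one_add_mul {u c : ℕ → ℝ} {N : ℕ} (hu : ∀ n ≥ N, 0 ≤ u n)
    (hc : ∀ n, 0 ≤ c n) (hcs : Summable c) (h : ∀ n ≥ N, u (n + 1) ≤ (1 + c n) * u n) :
    ∀ n ≥ N, u n ≤ u N * Real.exp (∑' k, c k) := by
  have key : ∀ n ≥ N, u n ≤ u N * Real.exp (∑ k ∈ Finset.Ico N n, c k) := by
    refine Nat.le_induction (by simp) fun n hn ih => ?_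
    calc u (n + 1) ≤ (1 + c n) * u n := h n hn
      _ ≤ Real.exp (c n) * (u N * Real.exp (∑ k ∈ Finset.Ico N n, c k)) :=
        mul_le_mul (by linarith [Real.add_one_le_exp (c n)]) ih (hu n hn) (Real.exp_pos _).le
      _ = u N * Real.exp (∑ k ∈ Finset.Ico N (n + 1), c k) := by
        rw [Finset.sum_Ico_succ_top hn, Real.exp_add]; ring
  intro n hn
  refine (key n hn).trans (mul_le_mul_of_nonneg_left ?_ (hu N le_rfl))
  exact Real.exp_le_exp.2 (hcs.sum_le_tsum _ fun k _ => hc k)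

theorem abs_mul_mul_le_of_le_two_mul {β₀ β₁ p q : ℝ} (hβ₀ : 0 ≤ β₀) (hβ : β₀ ≤ 2 * β₁) :
    |β₀ * p * q| ≤ β₀ * p ^ 2 + β₁ * q ^ 2 := by
  rw [abs_le]
  constructor <;> nlinarith [mul_nonneg hβ₀ (sq_nonneg (p - q)), mul_nonneg hβ₀ (sq_nonneg (p + q)),
    sq_nonneg q]

theorem abs_mul_sub_le_of_abs_le {x X u v : ℝ} (hx : |x| ≤ X) : |x * u - v| ≤ X * |u| + |v| :=
  (abs_sub _ _).trans (by rw [abs_mul]; gcongr)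

theorem le_two_mul_of_abs_div_sub_one_le {β₀ β₁ : ℝ} (hβ₁ : 0 < β₁) (h : |β₀ / β₁ - 1| ≤ 1 / 2) :
    β₀ ≤ 2 * β₁ ∧ β₁ ≤ 2 * β₀ := by
  obtain ⟨h₁, h₂⟩ := abs_le.1 h
  have hlo := (le_div_iff₀ hβ₁).1 (by linarith : 1 / 2 ≤ β₀ / β₁)
  have hhi := (div_le_iff₀ hβ₁).1 (by linarith : β₀ / β₁ ≤ 3 / 2)
  constructor <;> linarith

theorem eventually_abs_sub_le_mul {a b : ℕ → ℝ} {s r : ℝ} (hb : Tendsto b atTop atTop)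
    (hab : Tendsto (fun n => a n / b n) atTop (𝓝 s)) (hr : |s| < r) (X : ℝ) :
    ∀ᶠ n in atTop, ∀ x, |x| ≤ X → |x - a n| ≤ r * b n := by
  set r' := (|s| + r) / 2
  have hsmall : ∀ᶠ n in atTop, |a n / b n| < r' :=
    hab.abs.eventually (gt_mem_nhds (by simp only [r']; linarith))
  have hlarge : ∀ᶠ n in atTop, X / (r - r') ≤ b n := hb.eventually_ge_atTop _
  filter_upwards [hsmall, hlarge, hb.eventually_gt_atTop 0] with n hsmall hlarge hpos x hx
  rw [abs_div, abs_of_pos hpos, div_lt_iff₀ hpos] at hsmall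
  rw [div_le_iff₀ (by simp only [r']; linarith)] at hlarge
  calc |x - a n| ≤ |x| + |a n| := abs_sub _ _
    _ ≤ r * b n := by linarith

section Jacobi

variable (a b p : ℕ → ℝ) (x : ℝ)

def jacobiQuad (n : ℕ) : ℝ :=
  b n * (p n ^ 2 + p (n + 1) ^ 2) - (x - a n) * p n * p (n + 1)

/-- Adding `(b_n - b_{n+1}) P_{n+1}²` cancels the part
`(1 - b_n / b_{n+1}) (b_{n+1} P_{n+1}² - b_n P_n²)` of `Q_{n+1} - Q_n`, which need not be
summable. -/
def jacobiQuadCorr (n : ℕ) : ℝ :=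
  jacobiQuad a b p x (n + 1) + (b n - b (n + 1)) * p (n + 1) ^ 2

variable {a b p x}

theorem turan_eq_jacobiQuad {n : ℕ}
    (hrec : b n * p n + a (n + 1) * p (n + 1) + b (n + 1) * p (n + 2) = x * p (n + 1)) :
    b (n + 1) * p (n + 1) ^ 2 - b n * p n * p (n + 2) = jacobiQuad a b p x (n + 1) := by
  unfold jacobiQuad
  linear_combination (-p (n + 2)) * hrec

theorem mul_add_le_jacobiQuad {δ : ℝ} {n : ℕ} (hδ : 0 ≤ δ) (hb : 0 ≤ b n)
    (hx : |x - a n| ≤ (2 - 4 * δ) * b n) (hb' : b (n + 1) ≤ 2 * b n) :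
    δ * (b n * p n ^ 2 + b (n + 1) * p (n + 1) ^ 2) ≤ jacobiQuad a b p x n := by
  unfold jacobiQuad
  obtain ⟨h₁, h₂⟩ := abs_le.1 hx
  nlinarith [
    mul_nonneg (by linarith : 0 ≤ (2 - 4 * δ) * b n - (x - a n)) (sq_nonneg (p n + p (n + 1))),
    mul_nonneg (by linarith : 0 ≤ (2 - 4 * δ) * b n + (x - a n)) (sq_nonneg (p n - p (n + 1))),
    mul_nonneg hδ (mul_nonneg hb (sq_nonneg (p n))),
    mul_nonneg hδ (mul_nonneg (by linarith : 0 ≤ 2 * b n - b (n + 1)) (sq_nonneg (p (n + 1))))]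

theorem jacobiQuadCorr_succ_sub {n : ℕ} (hb₁ : b (n + 1) ≠ 0) (hb₂ : b (n + 2) ≠ 0)
    (hrec : b (n + 1) * p (n + 1) + a (n + 2) * p (n + 2) + b (n + 2) * p (n + 3) = x * p (n + 2)) :
    jacobiQuadCorr a b p x (n + 1) - jacobiQuadCorr a b p x n =
      (b (n + 1) / b (n + 2) - b n / b (n + 1)) * (b (n + 1) * p (n + 1) ^ 2) -
        (x * (1 / b (n + 2) - 1 / b (n + 1)) - (a (n + 2) / b (n + 2) - a (n + 1) / b (n + 1))) *
          (b (n + 1) * p (n + 1) * p (n + 2)) := by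
  have hp : p (n + 3) = ((x - a (n + 2)) * p (n + 2) - b (n + 1) * p (n + 1)) / b (n + 2) := by
    field_simp; linarith
  simp only [jacobiQuadCorr, jacobiQuad, hp]
  field_simp
  ring

theorem jacobiQuad_le_two_mul_jacobiQuadCorr {δ : ℝ} {n : ℕ} (hb₁ : 0 < b (n + 1))
    (hb₂ : 0 ≤ b (n + 2))
    (hQ : δ * (b (n + 1) * p (n + 1) ^ 2 + b (n + 2) * p (n + 2) ^ 2) ≤ jacobiQuad a b p x (n + 1))
    (hρ : |b n / b (n + 1) - 1| ≤ δ / 2) :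
    jacobiQuad a b p x (n + 1) ≤ 2 * jacobiQuadCorr a b p x n := by
  have hδ : 0 ≤ δ := by linarith [abs_nonneg (b n / b (n + 1) - 1)]
  have hdrop : b (n + 1) - b n ≤ δ / 2 * b (n + 1) := by
    have := (le_div_iff₀ hb₁).1 (by linarith [(abs_le.1 hρ).1] : 1 - δ / 2 ≤ b n / b (n + 1))
    linarith
  have hw₂ : 0 ≤ δ * (b (n + 2) * p (n + 2) ^ 2) := by positivity
  unfold jacobiQuadCorr
  nlinarith [mul_le_mul_of_nonneg_right hdrop (sq_nonneg (p (n + 1)))]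

theorem jacobiQuadCorr_succ_le {δ c : ℝ} {n : ℕ} (hδ : 0 < δ) (hb₁ : 0 < b (n + 1))
    (hb₂ : 0 < b (n + 2)) (hb : b (n + 1) ≤ 2 * b (n + 2))
    (hrec : b (n + 1) * p (n + 1) + a (n + 2) * p (n + 2) + b (n + 2) * p (n + 3) = x * p (n + 2))
    (hQ : δ * (b (n + 1) * p (n + 1) ^ 2 + b (n + 2) * p (n + 2) ^ 2) ≤ jacobiQuad a b p x (n + 1))
    (hρ : |b n / b (n + 1) - 1| ≤ δ / 2)
    (hc : |b (n + 1) / b (n + 2) - b n / b (n + 1)| +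
      |x * (1 / b (n + 2) - 1 / b (n + 1)) - (a (n + 2) / b (n + 2) - a (n + 1) / b (n + 1))| ≤ c) :
    jacobiQuadCorr a b p x (n + 1) ≤ (1 + 2 / δ * c) * jacobiQuadCorr a b p x n := by
  set w := b (n + 1) * p (n + 1) ^ 2 + b (n + 2) * p (n + 2) ^ 2
  have hw₁ : 0 ≤ b (n + 1) * p (n + 1) ^ 2 := by positivity
  have hw₂ : 0 ≤ b (n + 2) * p (n + 2) ^ 2 := by positivity
  have hincr : jacobiQuadCorr a b p x (n + 1) - jacobiQuadCorr a b p x n ≤ c * w := by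
    rw [jacobiQuadCorr_succ_sub hb₁.ne' hb₂.ne' hrec]
    set ρ' := b (n + 1) / b (n + 2) - b n / b (n + 1)
    set θ := x * (1 / b (n + 2) - 1 / b (n + 1)) - (a (n + 2) / b (n + 2) - a (n + 1) / b (n + 1))
    have hcross : |b (n + 1) * p (n + 1) * p (n + 2)| ≤ w :=
      abs_mul_mul_le_of_le_two_mul hb₁.le hb
    have hρ' : ρ' * (b (n + 1) * p (n + 1) ^ 2) ≤ |ρ'| * w :=
      (mul_le_mul_of_nonneg_right (le_abs_self ρ') hw₁).trans
        (mul_le_mul_of_nonneg_left (by linarith) (abs_nonneg ρ'))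
    have hθ : -(θ * (b (n + 1) * p (n + 1) * p (n + 2))) ≤ |θ| * w :=
      (neg_le_abs _).trans (by rw [abs_mul]; exact mul_le_mul_of_nonneg_left hcross (abs_nonneg θ))
    nlinarith [mul_le_mul_of_nonneg_right hc (add_nonneg hw₁ hw₂)]
  have hw : w ≤ 2 / δ * jacobiQuadCorr a b p x n := by
    rw [div_mul_eq_mul_div, le_div_iff₀' hδ]
    linarith [jacobiQuad_le_two_mul_jacobiQuadCorr hb₁ hb₂.le hQ hρ]
  have hc₀ : 0 ≤ c := (add_nonneg (abs_nonneg _) (abs_nonneg _)).trans hc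
  nlinarith [mul_le_mul_of_nonneg_left hw hc₀]

theorem jacobiQuad_le_mul_exp {δ : ℝ} {c : ℕ → ℝ} {N : ℕ} (hδ : 0 < δ) (hb : ∀ n, 0 < b n)
    (hrec : ∀ n, b n * p n + a (n + 1) * p (n + 1) + b (n + 1) * p (n + 2) = x * p (n + 1))
    (hx : ∀ n ≥ N, |x - a n| ≤ (2 - 4 * δ) * b n) (hρ : ∀ n ≥ N, |b n / b (n + 1) - 1| ≤ δ / 2)
    (hc₀ : ∀ n, 0 ≤ c n) (hcs : Summable c)
    (hc : ∀ n ≥ N, |b (n + 1) / b (n + 2) - b n / b (n + 1)| +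
      |x * (1 / b (n + 2) - 1 / b (n + 1)) - (a (n + 2) / b (n + 2) - a (n + 1) / b (n + 1))| ≤
        c n) :
    ∀ n ≥ N, jacobiQuad a b p x (n + 1) ≤
      2 * jacobiQuadCorr a b p x N * Real.exp (∑' k, 2 / δ * c k) := by
  have hδ₁ : δ ≤ 1 := by nlinarith [abs_nonneg (x - a N), hx N le_rfl, hb N]
  have hratio : ∀ n ≥ N, b n ≤ 2 * b (n + 1) ∧ b (n + 1) ≤ 2 * b n := fun n hn =>
    le_two_mul_of_abs_div_sub_one_le (hb _) ((hρ n hn).trans (by linarith))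
  have hQ : ∀ n ≥ N, δ * (b n * p n ^ 2 + b (n + 1) * p (n + 1) ^ 2) ≤ jacobiQuad a b p x n :=
    fun n hn => mul_add_le_jacobiQuad hδ.le (hb n).le (hx n hn) (hratio n hn).2
  have hQF : ∀ n ≥ N, jacobiQuad a b p x (n + 1) ≤ 2 * jacobiQuadCorr a b p x n := fun n hn =>
    jacobiQuad_le_two_mul_jacobiQuadCorr (hb _) (hb _).le (hQ (n + 1) (by omega)) (hρ n hn)
  have hF₀ : ∀ n ≥ N, 0 ≤ jacobiQuadCorr a b p x n := fun n hn => by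
    have := hb (n + 1)
    have := hb (n + 2)
    have : 0 ≤ δ * (b (n + 1) * p (n + 1) ^ 2 + b (n + 2) * p (n + 2) ^ 2) := by positivity
    linarith [hQ (n + 1) (by omega), hQF n hn]
  have hstep : ∀ n ≥ N, jacobiQuadCorr a b p x (n + 1) ≤
      (1 + 2 / δ * c n) * jacobiQuadCorr a b p x n := fun n hn =>
    jacobiQuadCorr_succ_le hδ (hb _) (hb _) (hratio (n + 1) (by omega)).1 (hrec (n + 1))
      (hQ (n + 1) (by omega)) (hρ n hn) (hc n hn)
  intro n hn
  calc jacobiQuad a b p x (n + 1) ≤ 2 * jacobiQuadCorr a b p x n := hQF n hn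
    _ ≤ _ := by
      rw [mul_assoc]
      gcongr
      exact le_mul_exp_tsum_of_le_one_add_mul hF₀ (fun k => by have := hc₀ k; positivity)
        (hcs.mul_left _) hstep n hn

end Jacobi

theorem continuous_of_three_term_rec {a b : ℕ → ℝ} {P : ℕ → ℝ → ℝ} (hb : ∀ n, b n ≠ 0)
    (h₀ : Continuous (P 0)) (h₁ : Continuous (P 1))
    (hrec : ∀ n x,
      b n * P n x + a (n + 1) * P (n + 1) x + b (n + 1) * P (n + 2) x = x * P (n + 1) x) :
    ∀ n, Continuous (P n) := by
  suffices ∀ n, Continuous (P n) ∧ Continuous (P (n + 1)) from fun n => (this n).1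
  intro n
  induction n with
  | zero => exact ⟨h₀, h₁⟩
  | succ n ih =>
    obtain ⟨hn, hn₁⟩ := ih
    refine ⟨hn₁, ?_⟩
    have hP : P (n + 2) = fun x => ((x - a (n + 1)) * P (n + 1) x - b n * P n x) / b (n + 1) :=
      funext fun x => by rw [eq_div_iff (hb _)]; linarith [hrec n x]
    rw [hP]
    fun_prop

theorem stmt18_general (a : ℕ → ℝ) (b : ℕ → ℝ) (hb : ∀ n, 0 < b n)
    (h1 : Tendsto b atTop atTop)
    (s : ℝ) (hs : |s| < 2)
    (h2 : Tendsto (fun n => a n / b n) atTop (nhds s))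
    (h3 : Tendsto (fun n => b n / b (n + 1)) atTop (nhds 1))
    (h4a : Summable (fun n : ℕ => |b (n + 1) / b (n + 2) - b n / b (n + 1)|))
    (h4b : Summable (fun n : ℕ => |1 / b (n + 1) - 1 / b n|))
    (h4c : Summable (fun n : ℕ => |a (n + 1) / b (n + 1) - a n / b n|))
    (P : ℕ → ℝ → ℝ)
    (hP0 : ∀ x : ℝ, P 0 x = 1)
    (hP1 : ∀ x : ℝ, P 1 x = (x - a 0) / b 0)
    (hPrec : ∀ (n : ℕ) (x : ℝ),
      b n * P n x + a (n + 1) * P (n + 1) x + b (n + 1) * P (n + 2) x = x * P (n + 1) x)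
    (A B : ℝ) :
    ∃ C : ℝ, ∃ N : ℕ, ∀ n ≥ N, ∀ x ∈ Set.Icc A B,
      b n * P n x ^ 2 - b (n - 1) * P (n - 1) x * P (n + 1) x ≤ C := by
  set X := max |A| |B|
  set δ := (2 - |s|) / 8
  have hδ : 0 < δ := by simp only [δ]; linarith
  obtain ⟨N, hN⟩ := eventually_atTop.1 ((eventually_abs_sub_le_mul h1 h2
    (by simp only [δ]; linarith : |s| < 2 - 4 * δ) X).and
    (h3.eventually (Metric.closedBall_mem_nhds 1 (half_pos hδ))))
  set c : ℕ → ℝ := fun n => |b (n + 1) / b (n + 2) - b n / b (n + 1)| +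
    (X * |1 / b (n + 2) - 1 / b (n + 1)| + |a (n + 2) / b (n + 2) - a (n + 1) / b (n + 1)|)
  have hcs : Summable c := h4a.add ((((summable_nat_add_iff 1).2 h4b).mul_left X).add
    ((summable_nat_add_iff 1).2 h4c))
  have hcont := continuous_of_three_term_rec (fun n => (hb n).ne')
    (continuous_const.congr fun x => (hP0 x).symm)
    ((continuous_id.sub continuous_const).div_const _ |>.congr fun x => (hP1 x).symm) hPrec
  obtain ⟨M, hM⟩ : BddAbove ((fun x => jacobiQuadCorr a b (P · x) x N) '' Set.Icc A B) :=
    isCompact_Icc.bddAbove_image (by unfold jacobiQuadCorr jacobiQuad; fun_prop)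
  refine ⟨2 * M * Real.exp (∑' k, 2 / δ * c k), N + 1, fun n hn x hx => ?_⟩
  obtain ⟨m, rfl⟩ : ∃ m, n = m + 1 := ⟨n - 1, by omega⟩
  have hxX : |x| ≤ X := abs_le_max_abs_abs hx.1 hx.2
  rw [Nat.add_sub_cancel]
  calc _ = jacobiQuad a b (P · x) x (m + 1) := turan_eq_jacobiQuad (hPrec m x)
    _ ≤ 2 * jacobiQuadCorr a b (P · x) x N * Real.exp (∑' k, 2 / δ * c k) :=
        jacobiQuad_le_mul_exp hδ hb (hPrec · x) (fun k hk => (hN k hk).1 x hxX)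
          (fun k hk => (hN k hk).2) (fun k => by positivity) hcs
          (fun k _ => add_le_add_right (abs_mul_sub_le_of_abs_le hxX) _) m (by omega)
    _ ≤ 2 * M * Real.exp (∑' k, 2 / δ * c k) := by
      gcongr
      exact hM (Set.mem_image_of_mem _ hx)

/-- Under the conditions (1) `b_n → ∞`, (2) `a_n/b_n → s` with `|s| < 2`,
(3) `b_n/b_{n+1} → 1`, (4) absolute summability of `(b_{n-1}/b_n − b_{n-2}/b_{n-1})`,
`(1/b_n − 1/b_{n-1})`, `(a_n/b_n − a_{n-1}/b_{n-1})`, the Turán-type determinants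
`Δ_n(x) = b_n P_n(x)² − b_{n-1} P_{n-1}(x) P_{n+1}(x)` are eventually uniformly bounded
on every finite interval `[A,B]`. -/
theorem stmt18 (a : ℕ → ℝ) (b : ℕ → ℝ) (hb : ∀ n, 0 < b n)
    (h1 : Tendsto b atTop atTop)
    (s : ℝ) (hs : |s| < 2)
    (h2 : Tendsto (fun n => a n / b n) atTop (nhds s))
    (h3 : Tendsto (fun n => b n / b (n + 1)) atTop (nhds 1))
    (h4a : Summable (fun n : ℕ => |b (n + 1) / b (n + 2) - b n / b (n + 1)|))
    (h4b : Summable (fun n : ℕ => |1 / b (n + 1) - 1 / b n|))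
    (h4c : Summable (fun n : ℕ => |a (n + 1) / b (n + 1) - a n / b n|))
    (P : ℕ → ℝ → ℝ)
    (hP0 : ∀ x : ℝ, P 0 x = 1)
    (hP1 : ∀ x : ℝ, P 1 x = (x - a 0) / b 0)
    (hPrec : ∀ (n : ℕ) (x : ℝ),
      b n * P n x + a (n + 1) * P (n + 1) x + b (n + 1) * P (n + 2) x = x * P (n + 1) x)
    (A B : ℝ) (hAB : A ≤ B) :
    ∃ C : ℝ, ∃ N : ℕ, ∀ n ≥ N, ∀ x ∈ Set.Icc A B,
      b n * P n x ^ 2 - b (n - 1) * P (n - 1) x * P (n + 1) x ≤ C :=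
  stmt18_general a b hb h1 s hs h2 h3 h4a h4b h4c P hP0 hP1 hPrec A B
end

section
/- Let (a_n)_{n≥0} be a real sequence and (b_n)_{n≥0} a positive real sequence such that: (1) b_n → +∞; (2) a_n/b_n → s with |s| < 2; (3) b_n/b_{n+1} → 1; (4) the sequences (b_{n−1}/b_n − b_{n−2}/b_{n−1}), (1/b_n − 1/b_{n−1}), and (a_n/b_n − a_{n−1}/b_{n−1}) are absolutely summable. Let P_n be the first-type polynomials of the associated Jacobi matrix and Δ_n(x) = b_n P_n(x)² − b_{n−1} P_{n−1}(x) P_{n+1}(x). Then for every finite interval [a,b] the sequence of functions Δ_n converges uniformly on [a,b] to a continuous function Δ satisfying Δ(x) > 0 for every x ∈ [a,b]. -/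
/-!
Write `β_m = b_m / b_{m+1}`, `τ_m(x) = (x - a_{m+1}) / b_{m+1}` and
`Q_m(u, w) = β_m u² - τ_m u w + w²` (`turanForm`). The recurrence reads
`(P_{m+1}, P_{m+2}) = (P_{m+1}, τ_m P_{m+1} - β_m P_m)`, and this substitution multiplies `Q_m`
by `β_m`. Hence `W_m = b_m Q_m(P_m, P_{m+1})` (`modifiedTuran`) changes only through the
coefficients: `W_{m+1} - W_m = b_{m+1} (Q_{m+1} - Q_m)(P_{m+1}, P_{m+2})`.

Since `β_m → 1` and `|τ_m| → |s| < 2` uniformly on `[A, B]`, eventually `Q_m ≥ ε (u² + w²)`, so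
`|W_{m+1} - W_m| ≤ c_m W_{m+1}` with `(c_m)` summable by (4). Such a sequence converges uniformly,
to a limit at least `W_N e^{-∑ c} > 0`. Finally `Δ_{m+1} = b_{m+1} Q(1, τ_m)(P_{m+1}, P_{m+2})`
differs from `W_{m+1}` by `o(1) W_{m+1}`.
-/

open Filter Real Finset

def turanForm (β τ u w : ℝ) : ℝ := β * u ^ 2 - τ * (u * w) + w ^ 2

noncomputable def coeffDist (K β p q β' p' q' : ℝ) : ℝ :=
  |β - β'| + (K * |1 / q - 1 / q'| + |p / q - p' / q'|) / 2

section TuranForm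

lemma two_mul_abs_mul_le_sq_add_sq (u w : ℝ) : 2 * |u * w| ≤ u ^ 2 + w ^ 2 := by
  rw [abs_mul, ← mul_assoc, ← sq_abs u, ← sq_abs w]
  exact two_mul_le_add_sq |u| |w|

lemma turanForm_shift (β τ u w : ℝ) :
    β * turanForm β τ u w = turanForm β τ w (τ * w - β * u) := by
  unfold turanForm
  ring

lemma mul_sq_add_sq_le_turanForm {ε β τ : ℝ} (hε : 0 ≤ ε) (hβ : 1 - ε ≤ β)
    (hτ : |τ| ≤ 2 - 4 * ε) (u w : ℝ) : ε * (u ^ 2 + w ^ 2) ≤ turanForm β τ u w := by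
  have hτuw : τ * (u * w) ≤ (1 - 2 * ε) * (u ^ 2 + w ^ 2) :=
    calc τ * (u * w) ≤ |τ| * |u * w| := (le_abs_self _).trans (abs_mul _ _).le
      _ ≤ (2 - 4 * ε) * |u * w| := by gcongr
      _ ≤ (1 - 2 * ε) * (u ^ 2 + w ^ 2) := by
        nlinarith [two_mul_abs_mul_le_sq_add_sq u w, (abs_nonneg τ).trans hτ]
  unfold turanForm
  nlinarith [mul_le_mul_of_nonneg_right hβ (sq_nonneg u), mul_nonneg hε (sq_nonneg w)]

lemma abs_turanForm_sub_le {K x : ℝ} (hx : |x| ≤ K) (β p q β' p' q' u w : ℝ) :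
    |turanForm β ((x - p) / q) u w - turanForm β' ((x - p') / q') u w|
      ≤ coeffDist K β p q β' p' q' * (u ^ 2 + w ^ 2) := by
  have hτ : |(x - p) / q - (x - p') / q'| ≤ K * |1 / q - 1 / q'| + |p / q - p' / q'| :=
    calc |(x - p) / q - (x - p') / q'| = |x * (1 / q - 1 / q') - (p / q - p' / q')| := by
          congr 1; ring
      _ ≤ |x| * |1 / q - 1 / q'| + |p / q - p' / q'| := (abs_sub _ _).trans (by rw [abs_mul])
      _ ≤ K * |1 / q - 1 / q'| + |p / q - p' / q'| := by gcongr
  calc |turanForm β ((x - p) / q) u w - turanForm β' ((x - p') / q') u w|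
      = |(β - β') * u ^ 2 - ((x - p) / q - (x - p') / q') * (u * w)| := by
        unfold turanForm; congr 1; ring
    _ ≤ |β - β'| * u ^ 2 + |(x - p) / q - (x - p') / q'| * |u * w| := by
        refine (abs_sub _ _).trans ?_
        rw [abs_mul, abs_mul, abs_of_nonneg (sq_nonneg u)]
    _ ≤ coeffDist K β p q β' p' q' * (u ^ 2 + w ^ 2) := by
        unfold coeffDist
        nlinarith [mul_le_mul_of_nonneg_right hτ (abs_nonneg (u * w)),
          two_mul_abs_mul_le_sq_add_sq u w,
          mul_nonneg (abs_nonneg (β - β')) (sq_nonneg w), abs_nonneg (u * w),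
          (abs_nonneg _).trans hτ]

lemma coeffDist_nonneg {K : ℝ} (hK : 0 ≤ K) (β p q β' p' q' : ℝ) :
    0 ≤ coeffDist K β p q β' p' q' := by
  unfold coeffDist
  positivity

lemma abs_mul_turanForm_sub_le {K x B ε V u w : ℝ} (hx : |x| ≤ K) (hB : 0 ≤ B) (hε : 0 < ε)
    (hV : ε * (B * (u ^ 2 + w ^ 2)) ≤ V) (β p q β' p' q' : ℝ) :
    |B * (turanForm β ((x - p) / q) u w - turanForm β' ((x - p') / q') u w)|
      ≤ coeffDist K β p q β' p' q' / ε * V := by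
  rw [abs_mul, abs_of_nonneg hB]
  calc B * |turanForm β ((x - p) / q) u w - turanForm β' ((x - p') / q') u w|
      ≤ B * (coeffDist K β p q β' p' q' * (u ^ 2 + w ^ 2)) := by
        gcongr; exact abs_turanForm_sub_le hx β p q β' p' q' u w
    _ = coeffDist K β p q β' p' q' / ε * (ε * (B * (u ^ 2 + w ^ 2))) := by
        field_simp
    _ ≤ coeffDist K β p q β' p' q' / ε * V := by
        have := coeffDist_nonneg ((abs_nonneg x).trans hx) β p q β' p' q'
        gcongr

end TuranForm

section MultiplicativePerturbation

lemma mul_exp_neg_le_of_abs_sub_le_mul {c u v : ℝ} (hv : 0 ≤ v)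
    (h : |v - u| ≤ c * v) : u * exp (-c) ≤ v := by
  have hu : u ≤ v * exp c := by
    nlinarith [neg_abs_le (v - u), mul_le_mul_of_nonneg_left (add_one_le_exp c) hv]
  calc u * exp (-c) ≤ v * exp c * exp (-c) := by gcongr
    _ = v := by rw [mul_assoc, ← exp_add, add_neg_cancel, exp_zero, mul_one]

lemma le_mul_exp_two_mul_of_abs_sub_le_mul {c u v : ℝ} (hc : 0 ≤ c) (hc2 : c ≤ 1 / 2)
    (hv : 0 ≤ v) (h : |v - u| ≤ c * v) : v ≤ u * exp (2 * c) := by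
  have hvu : v * (1 - c) ≤ u := by linarith [le_abs_self (v - u)]
  have hu : 0 ≤ u := le_trans (mul_nonneg hv (by linarith)) hvu
  calc v ≤ v * (1 - c) * (1 + 2 * c) := by
        nlinarith [mul_nonneg hv (mul_nonneg hc (by linarith : 0 ≤ 1 - 2 * c))]
    _ ≤ u * (1 + 2 * c) := by gcongr
    _ ≤ u * exp (2 * c) := by gcongr; linarith [add_one_le_exp (2 * c)]

variable {y c : ℕ → ℝ} {N : ℕ}

lemma mul_exp_neg_sum_le
    (hy : ∀ n ≥ N, 0 ≤ y (n + 1) ∧ |y (n + 1) - y n| ≤ c n * y (n + 1)) :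
    ∀ n ≥ N, y N * exp (-∑ j ∈ Ico N n, c j) ≤ y n := by
  refine Nat.le_induction (by simp) fun n hn ih => ?_
  rw [sum_Ico_succ_top hn, neg_add, exp_add, ← mul_assoc]
  exact (mul_le_mul_of_nonneg_right ih (exp_pos _).le).trans
    (mul_exp_neg_le_of_abs_sub_le_mul (hy n hn).1 (hy n hn).2)

lemma le_mul_exp_sum (hc : ∀ n, 0 ≤ c n) (hc2 : ∀ n ≥ N, c n ≤ 1 / 2)
    (hy : ∀ n ≥ N, 0 ≤ y (n + 1) ∧ |y (n + 1) - y n| ≤ c n * y (n + 1)) :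
    ∀ n ≥ N, y n ≤ y N * exp (2 * ∑ j ∈ Ico N n, c j) := by
  refine Nat.le_induction (by simp) fun n hn ih => ?_
  rw [sum_Ico_succ_top hn, mul_add, exp_add, ← mul_assoc]
  exact (le_mul_exp_two_mul_of_abs_sub_le_mul (hc n) (hc2 n hn) (hy n hn).1 (hy n hn).2).trans
    (mul_le_mul_of_nonneg_right ih (exp_pos _).le)

lemma tendstoUniformlyOn_of_eventually_abs_sub_le {X : Type*} {S : Set X} {f : ℕ → X → ℝ}
    {u : ℕ → ℝ} (hu : Summable u) (h : ∀ᶠ n in atTop, ∀ x ∈ S, |f (n + 1) x - f n x| ≤ u n) :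
    TendstoUniformlyOn f (fun x => f 0 x + ∑' n, (f (n + 1) x - f n x)) atTop S := by
  have hd := tendstoUniformlyOn_tsum_nat_eventually hu (f := fun n x => f (n + 1) x - f n x)
    (s := S) (by simpa only [Real.norm_eq_abs] using h)
  rw [Metric.tendstoUniformlyOn_iff] at hd ⊢
  refine fun δ hδ => (hd δ hδ).mono fun n hn x hx => ?_
  rw [← add_sub_cancel (f 0 x) (f n x), ← sum_range_sub (fun j => f j x), dist_add_left]
  exact hn x hx

theorem exists_tendstoUniformlyOn_of_abs_sub_le_mul {X : Type*} {S : Set X} {f : ℕ → X → ℝ}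
    (hc : Summable c) (hc0 : ∀ n, 0 ≤ c n)
    (hf : ∀ᶠ n in atTop, ∀ x ∈ S, 0 ≤ f (n + 1) x ∧ |f (n + 1) x - f n x| ≤ c n * f (n + 1) x)
    (hbdd : ∀ n, BddAbove (f n '' S)) :
    ∃ g M, TendstoUniformlyOn f g atTop S ∧ (∀ᶠ n in atTop, ∀ x ∈ S, f n x ≤ M) ∧
      ∀ x ∈ S, (∀ᶠ n in atTop, 0 < f n x) → 0 < g x := by
  obtain ⟨N, hN⟩ := eventually_atTop.1
    (hf.and (hc.tendsto_atTop_zero.eventually (eventually_le_nhds (by norm_num : (0 : ℝ) < 1 / 2))))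
  have hsum : ∀ n k, ∑ j ∈ Ico n k, c j ≤ ∑' j, c j :=
    fun n k => hc.sum_le_tsum _ fun j _ => hc0 j
  obtain ⟨M₀, hM₀⟩ := hbdd N
  set M := max M₀ 0 * exp (2 * ∑' j, c j)
  have hM : ∀ n ≥ N, ∀ x ∈ S, f n x ≤ M := fun n hn x hx =>
    calc f n x ≤ f N x * exp (2 * ∑ j ∈ Ico N n, c j) :=
          le_mul_exp_sum (y := fun n => f n x) hc0 (fun n hn => (hN n hn).2)
            (fun n hn => (hN n hn).1 x hx) n hn
      _ ≤ max M₀ 0 * exp (2 * ∑ j ∈ Ico N n, c j) := by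
          gcongr; exact le_max_of_le_left (hM₀ ⟨x, hx, rfl⟩)
      _ ≤ M := mul_le_mul_of_nonneg_left (exp_le_exp.2 (by linarith [hsum N n])) (le_max_right _ _)
  have hU := tendstoUniformlyOn_of_eventually_abs_sub_le (hc.mul_right M) (S := S) (f := f) (by
    filter_upwards [eventually_ge_atTop N] with n hn x hx
    exact ((hN n hn).1 x hx).2.trans (by gcongr; exacts [hc0 n, hM (n + 1) (by omega) x hx]))
  refine ⟨_, M, hU, eventually_atTop.2 ⟨N, hM⟩, fun x hx hpos => ?_⟩
  obtain ⟨n, hfn, hn⟩ := (hpos.and (eventually_ge_atTop N)).exists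
  have hlow : ∀ k ≥ n, f n x * exp (-∑' j, c j) ≤ f k x := fun k hk =>
    calc f n x * exp (-∑' j, c j) ≤ f n x * exp (-∑ j ∈ Ico n k, c j) := by
          gcongr; exact hsum n k
      _ ≤ f k x := mul_exp_neg_sum_le (y := fun n => f n x)
          (fun m hm => (hN m (hn.trans hm)).1 x hx) k hk
  exact (mul_pos hfn (exp_pos _)).trans_le
    (ge_of_tendsto (hU.tendsto_at hx) (eventually_atTop.2 ⟨n, hlow⟩))

end MultiplicativePerturbation

lemma TendstoUniformlyOn.of_abs_sub_le {ι X : Type*} {l : Filter ι} {S : Set X}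
    {F G : ι → X → ℝ} {g : X → ℝ} {e : ι → ℝ} (hF : TendstoUniformlyOn F g l S)
    (he : Tendsto e l (nhds 0)) (hFG : ∀ᶠ n in l, ∀ x ∈ S, |G n x - F n x| ≤ e n) :
    TendstoUniformlyOn G g l S := by
  rw [Metric.tendstoUniformlyOn_iff] at hF ⊢
  intro δ hδ
  filter_upwards [hF (δ / 2) (half_pos hδ), he.eventually (gt_mem_nhds (half_pos hδ)), hFG]
    with n hFn hen hFGn x hx
  calc dist (g x) (G n x) ≤ dist (g x) (F n x) + dist (F n x) (G n x) := dist_triangle _ _ _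
    _ < δ / 2 + δ / 2 := by
        rw [Real.dist_eq (F n x), abs_sub_comm]
        exact add_lt_add_of_lt_of_le (hFn x hx) ((hFGn x hx).trans hen.le)
    _ = δ := add_halves δ

section Jacobi

variable {a b : ℕ → ℝ} {P : ℕ → ℝ → ℝ}

def JacobiRecurrence (a b : ℕ → ℝ) (P : ℕ → ℝ → ℝ) : Prop :=
  ∀ n x, b n * P n x + a (n + 1) * P (n + 1) x + b (n + 1) * P (n + 2) x = x * P (n + 1) x

noncomputable def modifiedTuran (a b : ℕ → ℝ) (P : ℕ → ℝ → ℝ) (m : ℕ) (x : ℝ) : ℝ :=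
  b m * turanForm (b m / b (m + 1)) ((x - a (m + 1)) / b (m + 1)) (P m x) (P (m + 1) x)

noncomputable def formStepDist (a b : ℕ → ℝ) (K : ℝ) (m : ℕ) : ℝ :=
  coeffDist K (b (m + 1) / b (m + 2)) (a (m + 2)) (b (m + 2))
    (b m / b (m + 1)) (a (m + 1)) (b (m + 1))

noncomputable def turanFormDist (a b : ℕ → ℝ) (K : ℝ) (n : ℕ) : ℝ :=
  coeffDist K 1 (a n) (b n) (b n / b (n + 1)) (a (n + 1)) (b (n + 1))

namespace JacobiRecurrence

lemma succ_succ (hP : JacobiRecurrence a b P) (hb : ∀ n, 0 < b n) (n : ℕ) (x : ℝ) :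
    P (n + 2) x = (x - a (n + 1)) / b (n + 1) * P (n + 1) x - b n / b (n + 1) * P n x := by
  have := hb (n + 1)
  field_simp
  linarith [hP n x]

lemma continuous (hP : JacobiRecurrence a b P) (hb : ∀ n, 0 < b n) (h0 : Continuous (P 0))
    (h1 : Continuous (P 1)) (n : ℕ) : Continuous (P n) := by
  induction n using Nat.twoStepInduction with
  | zero => exact h0
  | one => exact h1
  | more n ihn ihn1 =>
    rw [show P (n + 2) = _ from funext (hP.succ_succ hb n)]
    fun_prop

lemma sq_add_sq_pos (hP : JacobiRecurrence a b P) (hb : ∀ n, 0 < b n) {x : ℝ} (h0 : P 0 x ≠ 0)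
    (n : ℕ) : 0 < P n x ^ 2 + P (n + 1) x ^ 2 := by
  suffices h : P n x ≠ 0 ∨ P (n + 1) x ≠ 0 by
    rcases h with h | h <;> positivity
  induction n with
  | zero => exact Or.inl h0
  | succ n ih =>
    by_contra! h
    have := hP n x
    rw [h.1, h.2] at this
    exact ih.elim (· ((mul_eq_zero.1 (by linarith)).resolve_left (hb n).ne')) (· h.1)

lemma modifiedTuran_eq_shift (hP : JacobiRecurrence a b P) (hb : ∀ n, 0 < b n) (m : ℕ) (x : ℝ) :
    modifiedTuran a b P m x = b (m + 1) *
      turanForm (b m / b (m + 1)) ((x - a (m + 1)) / b (m + 1)) (P (m + 1) x) (P (m + 2) x) := by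
  rw [hP.succ_succ hb, ← turanForm_shift, ← mul_assoc, mul_div_cancel₀ _ (hb _).ne']
  rfl

lemma modifiedTuran_succ_sub (hP : JacobiRecurrence a b P) (hb : ∀ n, 0 < b n) (m : ℕ) (x : ℝ) :
    modifiedTuran a b P (m + 1) x - modifiedTuran a b P m x = b (m + 1) *
      (turanForm (b (m + 1) / b (m + 2)) ((x - a (m + 2)) / b (m + 2)) (P (m + 1) x) (P (m + 2) x) -
        turanForm (b m / b (m + 1)) ((x - a (m + 1)) / b (m + 1)) (P (m + 1) x) (P (m + 2) x)) := by
  rw [hP.modifiedTuran_eq_shift hb m, modifiedTuran, mul_sub]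

lemma turan_eq_turanForm (hP : JacobiRecurrence a b P) (hb : ∀ n, 0 < b n) (m : ℕ) (x : ℝ) :
    b (m + 1) * P (m + 1) x ^ 2 - b m * P m x * P (m + 2) x =
      b (m + 1) * turanForm 1 ((x - a (m + 1)) / b (m + 1)) (P (m + 1) x) (P (m + 2) x) := by
  have hm : b m * P m x = (x - a (m + 1)) * P (m + 1) x - b (m + 1) * P (m + 2) x := by
    linarith [hP m x]
  have := hb (m + 1)
  rw [hm, turanForm]
  field_simp
  ring

lemma abs_modifiedTuran_succ_sub_le (hP : JacobiRecurrence a b P) (hb : ∀ n, 0 < b n)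
    {K ε x : ℝ} {m : ℕ} (hx : |x| ≤ K) (hε : 0 < ε)
    (hV : ε * (b (m + 1) * (P (m + 1) x ^ 2 + P (m + 2) x ^ 2)) ≤ modifiedTuran a b P (m + 1) x) :
    |modifiedTuran a b P (m + 1) x - modifiedTuran a b P m x|
      ≤ formStepDist a b K m / ε * modifiedTuran a b P (m + 1) x := by
  rw [hP.modifiedTuran_succ_sub hb]
  exact abs_mul_turanForm_sub_le hx (hb _).le hε hV _ _ _ _ _ _

lemma abs_turan_sub_modifiedTuran_le (hP : JacobiRecurrence a b P) (hb : ∀ n, 0 < b n)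
    {K ε x : ℝ} {m : ℕ} (hx : |x| ≤ K) (hε : 0 < ε)
    (hV : ε * (b (m + 1) * (P (m + 1) x ^ 2 + P (m + 2) x ^ 2)) ≤ modifiedTuran a b P (m + 1) x) :
    |b (m + 1) * P (m + 1) x ^ 2 - b m * P m x * P (m + 2) x - modifiedTuran a b P (m + 1) x|
      ≤ turanFormDist a b K (m + 1) / ε * modifiedTuran a b P (m + 1) x := by
  rw [hP.turan_eq_turanForm hb, modifiedTuran, ← mul_sub]
  exact abs_mul_turanForm_sub_le hx (hb _).le hε hV _ _ _ _ _ _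

end JacobiRecurrence

lemma continuous_modifiedTuran (hP : ∀ n, Continuous (P n)) (m : ℕ) :
    Continuous (modifiedTuran a b P m) := by
  have := hP m
  have := hP (m + 1)
  unfold modifiedTuran turanForm
  fun_prop

lemma summable_formStepDist (h4a : Summable fun n => |b (n + 1) / b (n + 2) - b n / b (n + 1)|)
    (h4b : Summable fun n => |1 / b (n + 1) - 1 / b n|)
    (h4c : Summable fun n => |a (n + 1) / b (n + 1) - a n / b n|) (K : ℝ) :
    Summable (formStepDist a b K) :=
  h4a.add ((((summable_nat_add_iff 1).2 h4b).mul_left K |>.add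
    ((summable_nat_add_iff 1).2 h4c)).div_const 2)

lemma tendsto_turanFormDist (h3 : Tendsto (fun n => b n / b (n + 1)) atTop (nhds 1))
    (h4b : Summable fun n => |1 / b (n + 1) - 1 / b n|)
    (h4c : Summable fun n => |a (n + 1) / b (n + 1) - a n / b n|) (K : ℝ) :
    Tendsto (turanFormDist a b K) atTop (nhds 0) := by
  have hβ : Tendsto (fun n => |1 - b n / b (n + 1)|) atTop (nhds 0) := by
    simpa using (h3.const_sub 1).abs
  have hb' := h4b.tendsto_atTop_zero
  have ha' := h4c.tendsto_atTop_zero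
  simp only [abs_sub_comm (1 / b (_ + 1)), abs_sub_comm (a (_ + 1) / b (_ + 1))] at hb' ha'
  unfold turanFormDist coeffDist
  simpa using hβ.add (((hb'.const_mul K).add ha').div_const 2)

lemma exists_eventually_mul_le_modifiedTuran (hb : ∀ n, 0 < b n) (h1 : Tendsto b atTop atTop)
    {s : ℝ} (hs : |s| < 2) (h2 : Tendsto (fun n => a n / b n) atTop (nhds s))
    (h3 : Tendsto (fun n => b n / b (n + 1)) atTop (nhds 1)) (P : ℕ → ℝ → ℝ) (K : ℝ) :
    ∃ ε > 0, ∀ᶠ m in atTop, ∀ x, |x| ≤ K →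
      ε * (b m * (P m x ^ 2 + P (m + 1) x ^ 2)) ≤ modifiedTuran a b P m x := by
  -- eventually `|τ_m| ≤ K / b_{m+1} + |a_{m+1} / b_{m+1}| ≤ |s| + 2ε = 2 - 6ε`
  set ε := (2 - |s|) / 8
  have hε : 0 < ε := by simp only [ε]; linarith
  have ha : Tendsto (fun m => |a (m + 1) / b (m + 1)|) atTop (nhds |s|) :=
    ((tendsto_add_atTop_iff_nat 1).2 h2).abs
  have hK : Tendsto (fun m => K / b (m + 1)) atTop (nhds 0) :=
    tendsto_const_nhds.div_atTop ((tendsto_add_atTop_iff_nat 1).2 h1)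
  refine ⟨ε, hε, ?_⟩
  filter_upwards [h3.eventually (eventually_ge_nhds (by linarith : 1 - ε < 1)),
    ha.eventually (eventually_le_nhds (by linarith : |s| < |s| + ε)),
    hK.eventually (eventually_le_nhds hε)] with m hβ ham hKm x hx
  have hτ : |(x - a (m + 1)) / b (m + 1)| ≤ 2 - 4 * ε :=
    calc |(x - a (m + 1)) / b (m + 1)| ≤ |x| / b (m + 1) + |a (m + 1) / b (m + 1)| := by
          rw [sub_div, ← abs_of_pos (hb (m + 1)), ← abs_div, abs_of_pos (hb (m + 1))]
          exact abs_sub _ _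
      _ ≤ K / b (m + 1) + |a (m + 1) / b (m + 1)| := by gcongr; exact (hb _).le
      _ ≤ 2 - 4 * ε := by simp only [ε] at hKm ham ⊢; linarith
  rw [modifiedTuran, mul_left_comm]
  exact mul_le_mul_of_nonneg_left (mul_sq_add_sq_le_turanForm hε.le hβ hτ _ _) (hb m).le

end Jacobi

theorem stmt19_general (a : ℕ → ℝ) (b : ℕ → ℝ) (hb : ∀ n, 0 < b n)
    (h1 : Tendsto b atTop atTop)
    (s : ℝ) (hs : |s| < 2)
    (h2 : Tendsto (fun n => a n / b n) atTop (nhds s))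
    (h3 : Tendsto (fun n => b n / b (n + 1)) atTop (nhds 1))
    (h4a : Summable (fun n : ℕ => |b (n + 1) / b (n + 2) - b n / b (n + 1)|))
    (h4b : Summable (fun n : ℕ => |1 / b (n + 1) - 1 / b n|))
    (h4c : Summable (fun n : ℕ => |a (n + 1) / b (n + 1) - a n / b n|))
    (P : ℕ → ℝ → ℝ)
    (hP0 : ∀ x : ℝ, P 0 x = 1)
    (hP1 : ∀ x : ℝ, P 1 x = (x - a 0) / b 0)
    (hPrec : ∀ (n : ℕ) (x : ℝ),
      b n * P n x + a (n + 1) * P (n + 1) x + b (n + 1) * P (n + 2) x = x * P (n + 1) x)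
    (A B : ℝ) :
    ∃ Δ : ℝ → ℝ, ContinuousOn Δ (Set.Icc A B) ∧ (∀ x ∈ Set.Icc A B, 0 < Δ x) ∧
      TendstoUniformlyOn
        (fun (n : ℕ) (x : ℝ) => b n * P n x ^ 2 - b (n - 1) * P (n - 1) x * P (n + 1) x)
        Δ atTop (Set.Icc A B) := by
  have hP : JacobiRecurrence a b P := hPrec
  have hWc := continuous_modifiedTuran (a := a) (b := b) <| hP.continuous hb
    (continuous_const.congr fun x => (hP0 x).symm)
    (((continuous_id.sub continuous_const).div_const _).congr fun x => (hP1 x).symm)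
  set K := max |A| |B|
  have hK : ∀ x ∈ Set.Icc A B, |x| ≤ K := fun x hx => abs_le_max_abs_abs hx.1 hx.2
  have hK0 : 0 ≤ K := le_max_of_le_left (abs_nonneg A)
  obtain ⟨ε, hε, hWlow⟩ := exists_eventually_mul_le_modifiedTuran hb h1 hs h2 h3 P K
  have hWpos : ∀ᶠ m in atTop, ∀ x ∈ Set.Icc A B, 0 < modifiedTuran a b P m x :=
    hWlow.mono fun m hm x hx => lt_of_lt_of_le
      (mul_pos hε (mul_pos (hb m) (hP.sq_add_sq_pos hb (by simp [hP0]) m))) (hm x (hK x hx))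
  obtain ⟨g, M, hg, hM, hgpos⟩ := exists_tendstoUniformlyOn_of_abs_sub_le_mul (S := Set.Icc A B)
    ((summable_formStepDist h4a h4b h4c K).div_const ε)
    (fun m => div_nonneg (coeffDist_nonneg hK0 _ _ _ _ _ _) hε.le)
    (by
      filter_upwards [(tendsto_add_atTop_nat 1).eventually hWlow,
        (tendsto_add_atTop_nat 1).eventually hWpos] with m hlow hpos x hx
      exact ⟨(hpos x hx).le, hP.abs_modifiedTuran_succ_sub_le hb (hK x hx) hε (hlow x (hK x hx))⟩)
    (fun n => isCompact_Icc.bddAbove_image (hWc n).continuousOn)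
  refine ⟨g, hg.continuousOn (.of_forall fun n => (hWc n).continuousOn),
    fun x hx => hgpos x hx (hWpos.mono fun m hm => hm x hx), hg.of_abs_sub_le
      (e := fun n => turanFormDist a b K n / ε * M) (by
        simpa using ((tendsto_turanFormDist h3 h4b h4c K).div_const ε).mul_const M) ?_⟩
  filter_upwards [eventually_ge_atTop 1, hWlow, hM] with n hn hlow hMn x hx
  obtain ⟨m, rfl⟩ := Nat.exists_eq_add_of_le' hn
  exact (hP.abs_turan_sub_modifiedTuran_le hb (hK x hx) hε (hlow x (hK x hx))).trans
    (mul_le_mul_of_nonneg_left (hMn x hx) (div_nonneg (coeffDist_nonneg hK0 _ _ _ _ _ _) hε.le))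

/-- Under the conditions (1) `b_n → ∞`, (2) `a_n/b_n → s` with `|s| < 2`,
(3) `b_n/b_{n+1} → 1`, (4) absolute summability of `(b_{n-1}/b_n − b_{n-2}/b_{n-1})`,
`(1/b_n − 1/b_{n-1})`, `(a_n/b_n − a_{n-1}/b_{n-1})`, the functions
`Δ_n(x) = b_n P_n(x)² − b_{n-1} P_{n-1}(x) P_{n+1}(x)` converge uniformly on every finite
interval `[A,B]` to a continuous function `Δ` which is strictly positive on `[A,B]`. -/
theorem stmt19 (a : ℕ → ℝ) (b : ℕ → ℝ) (hb : ∀ n, 0 < b n)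
    (h1 : Tendsto b atTop atTop)
    (s : ℝ) (hs : |s| < 2)
    (h2 : Tendsto (fun n => a n / b n) atTop (nhds s))
    (h3 : Tendsto (fun n => b n / b (n + 1)) atTop (nhds 1))
    (h4a : Summable (fun n : ℕ => |b (n + 1) / b (n + 2) - b n / b (n + 1)|))
    (h4b : Summable (fun n : ℕ => |1 / b (n + 1) - 1 / b n|))
    (h4c : Summable (fun n : ℕ => |a (n + 1) / b (n + 1) - a n / b n|))
    (P : ℕ → ℝ → ℝ)
    (hP0 : ∀ x : ℝ, P 0 x = 1)
    (hP1 : ∀ x : ℝ, P 1 x = (x - a 0) / b 0)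
    (hPrec : ∀ (n : ℕ) (x : ℝ),
      b n * P n x + a (n + 1) * P (n + 1) x + b (n + 1) * P (n + 2) x = x * P (n + 1) x)
    (A B : ℝ) (hAB : A ≤ B) :
    ∃ Δ : ℝ → ℝ, ContinuousOn Δ (Set.Icc A B) ∧ (∀ x ∈ Set.Icc A B, 0 < Δ x) ∧
      TendstoUniformlyOn
        (fun (n : ℕ) (x : ℝ) => b n * P n x ^ 2 - b (n - 1) * P (n - 1) x * P (n + 1) x)
        Δ atTop (Set.Icc A B) :=
  stmt19_general a b hb h1 s hs h2 h3 h4a h4b h4c P hP0 hP1 hPrec A B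
end
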